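/- arXiv:1711.06755 — 4 statements merged into one kernel-verified Lean document; each statement's English description precedes it below -/
import Mathlib

section
/- Let G be a locally compact group, Ω ∈ Z²_bw(G,ℂ*) with associated weight ω, and let ⊛ and ⊛_T be the twisted convolutions coming from Ω and Ω_T respectively. Then the weighted Orlicz space L^Φ_ω(G) with norm ‖f‖_{Φ,ω} = ‖fω‖_Φ is a Banach space, and the map Λ_ω : L^Φ(G) → L^Φ_ω(G), Λ_ω(f) = f/ω, is a surjective linear isometry satisfying Λ_ω(f⊛g) = Λ_ω(f)⊛_T Λ_ω(g) and Λ_ω(g⊛f) = Λ_ω(g)⊛_T Λ_ω(f) for all f ∈ L¹(G) and g ∈ L^Φ(G). If moreover (L^Φ(G),⊛,‖·‖_Φ) is a twisted Orlicz algebra, these identities hold for all f,g ∈ L^Φ(G), so that (L^Φ_ω(G),⊛_T,‖·‖_{Φ,ω}) is a Banach algebra. -/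
open MeasureTheory Filter ENNReal NNReal Pointwise Topology

noncomputable section

/-- A Young function `Φ : [0,∞) → [0,∞)` (real-valued, continuous on `[0,∞)`,
positive on `(0,∞)`): convex, `Φ 0 = 0` and `Φ x → ∞` as `x → ∞`. -/
def IsYoung (Φ : ℝ → ℝ) : Prop :=
  ConvexOn ℝ (Set.Ici 0) Φ ∧ Φ 0 = 0 ∧ Tendsto Φ atTop atTop ∧
    ContinuousOn Φ (Set.Ici 0) ∧ (∀ x : ℝ, 0 ≤ x → 0 ≤ Φ x) ∧ ∀ x : ℝ, 0 < x → 0 < Φ x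

/-- The complementary (conjugate) Young function `Ψ(y) = sup{xy - Φ(x) : x ≥ 0}`,
with values in `[0,∞]`. -/
def youngConj (Φ : ℝ → ℝ) (y : ℝ) : ℝ≥0∞ :=
  ⨆ x : Set.Ici (0 : ℝ), ENNReal.ofReal ((x : ℝ) * y - Φ x)

variable {G : Type*} [MeasurableSpace G]

/-- The Orlicz (dual) norm `‖f‖_Φ = sup{∫ |f v| : ∫ Ψ(|v|) ≤ 1}` where `Ψ` is the
complementary Young function of `Φ`; with values in `[0,∞]`. -/
def orliczNorm (μ : Measure G) (Φ : ℝ → ℝ) (f : G → ℂ) : ℝ≥0∞ :=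
  ⨆ v ∈ {v : G → ℝ | Measurable v ∧ ∫⁻ s, youngConj Φ |v s| ∂μ ≤ 1},
    ∫⁻ s, (‖f s‖₊ : ℝ≥0∞) * (‖v s‖₊ : ℝ≥0∞) ∂μ

/-- Membership in the Orlicz space `L^Φ(G)`. -/
def MemOrlicz (μ : Measure G) (Φ : ℝ → ℝ) (f : G → ℂ) : Prop :=
  AEStronglyMeasurable f μ ∧
    ∃ α : ℝ, 0 < α ∧ ∫⁻ s, ENNReal.ofReal (Φ (α * ‖f s‖)) ∂μ < ⊤

/-- Membership in `S^Φ(G)` (the closure of the step functions in `L^Φ(G)`), via the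
characterization: `f ∈ S^Φ(G)` iff `∫ Φ(α|f|) < ∞` for every `α > 0`. -/
def MemOrliczHeart (μ : Measure G) (Φ : ℝ → ℝ) (f : G → ℂ) : Prop :=
  AEStronglyMeasurable f μ ∧
    ∀ α : ℝ, 0 < α → ∫⁻ s, ENNReal.ofReal (Φ (α * ‖f s‖)) ∂μ < ⊤

/-- Membership of a real-valued function in the Orlicz space `L^Ψ(G)`, where
`Ψ = youngConj Φ` is the (possibly infinite-valued) complementary function of `Φ`. -/
def MemOrliczConj (μ : Measure G) (Φ : ℝ → ℝ) (u : G → ℝ) : Prop :=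
  Measurable u ∧ ∃ α : ℝ, 0 < α ∧ ∫⁻ s, youngConj Φ (α * |u s|) ∂μ < ⊤

/-- The Luxemburg norm `N_Ψ(u) = inf{k > 0 : ∫ Ψ(|u|/k) ≤ 1}` of a real-valued function,
`Ψ = youngConj Φ` being the complementary function of `Φ`. -/
def luxNormConj (μ : Measure G) (Φ : ℝ → ℝ) (u : G → ℝ) : ℝ≥0∞ :=
  sInf {k : ℝ≥0∞ | 0 < k ∧ k ≠ ⊤ ∧ ∫⁻ s, youngConj Φ (|u s| / k.toReal) ∂μ ≤ 1}

/-- The weighted `L¹` norm `‖f‖_{1,ω} = ∫ |f| ω`. -/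
def wL1Norm (μ : Measure G) (ω : G → ℝ) (f : G → ℂ) : ℝ≥0∞ :=
  ∫⁻ s, (‖f s‖₊ : ℝ≥0∞) * ENNReal.ofReal (ω s) ∂μ

/-- Membership in the weighted space `L¹_ω(G) = {f : fω ∈ L¹(G)}`. -/
def MemWL1 (μ : Measure G) (ω : G → ℝ) (f : G → ℂ) : Prop :=
  AEStronglyMeasurable f μ ∧ wL1Norm μ ω f < ⊤

/-- The weighted Orlicz norm `‖f‖_{Φ,ω} = ‖fω‖_Φ`. -/
def wOrliczNorm (μ : Measure G) (Φ : ℝ → ℝ) (ω : G → ℝ) (f : G → ℂ) : ℝ≥0∞ :=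
  orliczNorm μ Φ (fun s => f s * (ω s : ℂ))

/-- Membership in the weighted Orlicz space `L^Φ_ω(G) = {f : fω ∈ L^Φ(G)}`. -/
def MemWOrlicz (μ : Measure G) (Φ : ℝ → ℝ) (ω : G → ℝ) (f : G → ℂ) : Prop :=
  MemOrlicz μ Φ (fun s => f s * (ω s : ℂ))

variable [Group G]

/-- A (normalized, Borel measurable) 2-cocycle on `G` with values in `ℂ* = ℂ \ {0}`. -/
structure IsCocycle (Ω : G × G → ℂ) : Prop where
  measurable : Measurable Ω
  ne_zero : ∀ p, Ω p ≠ 0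
  cocycle : ∀ r s t : G, Ω (r, s) * Ω (r * s, t) = Ω (s, t) * Ω (r, s * t)
  one_left : ∀ r : G, Ω ((1 : G), r) = 1
  one_right : ∀ r : G, Ω (r, (1 : G)) = 1

/-- The circle part `Ω_T = Ω / |Ω|` of a `ℂ*`-valued 2-cocycle. -/
def circlePart (Ω : G × G → ℂ) : G × G → ℂ := fun p => Ω p / (‖Ω p‖ : ℂ)

/-- `Ω ∈ Z²_b(G, ℂ*)`: a normalized Borel 2-cocycle which is (essentially) bounded on
`G × G` and whose circle part `Ω_T` is continuous. -/
def IsBddCocycle [TopologicalSpace G] (μ : Measure G) (Ω : G × G → ℂ) : Prop :=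
  IsCocycle Ω ∧ MemLp Ω ⊤ (μ.prod μ) ∧ Continuous (circlePart Ω)

/-- A weight on `G`: a locally integrable measurable function `ω : G → (0,∞)` with
`ω(e) = 1` and `1/ω ∈ L^∞(G)`. -/
structure IsWeight [TopologicalSpace G] (μ : Measure G) (ω : G → ℝ) : Prop where
  measurable : Measurable ω
  pos : ∀ s, 0 < ω s
  locInt : LocallyIntegrable ω μ
  one : ω 1 = 1
  inv_bdd : MemLp (fun s => (ω s)⁻¹) ⊤ μ

/-- `|Ω|` is the 2-coboundary determined by the weight `ω`. -/
def IsCoboundaryOf (Ω : G × G → ℂ) (ω : G → ℝ) : Prop :=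
  ∀ s t : G, ‖Ω (s, t)‖ = ω (s * t) / (ω s * ω t)

/-- The twisted convolution `(f ⊛ g)(t) = ∫ f(s) g(s⁻¹t) Ω(s, s⁻¹t) ds`. -/
def twConv (μ : Measure G) (Ω : G × G → ℂ) (f g : G → ℂ) : G → ℂ :=
  fun t => ∫ s, f s * g (s⁻¹ * t) * Ω (s, s⁻¹ * t) ∂μ

/-- The twisted involution `f^*(s) = conj(f(s⁻¹)) conj(Ω_T(s, s⁻¹))` (unimodular case). -/
def twStar (ΩT : G × G → ℂ) (f : G → ℂ) : G → ℂ :=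
  fun s => (starRingEnd ℂ) (f s⁻¹) * (starRingEnd ℂ) (ΩT (s, s⁻¹))

/-- `(L^Φ(G), ⊛)` is a twisted Orlicz algebra: `⊛` maps `L^Φ × L^Φ` into `L^Φ` and the
Orlicz norm is submultiplicative up to a constant `C > 0`. -/
def IsTwistedOrliczAlgebra (μ : Measure G) (Φ : ℝ → ℝ) (Ω : G × G → ℂ) : Prop :=
  ∃ C : ℝ≥0∞, 0 < C ∧ C ≠ ⊤ ∧ ∀ f g : G → ℂ, MemOrlicz μ Φ f → MemOrlicz μ Φ g →
    MemOrlicz μ Φ (twConv μ Ω f g) ∧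
      orliczNorm μ Φ (twConv μ Ω f g) ≤ C * orliczNorm μ Φ f * orliczNorm μ Φ g

/-- Symmetry of a (possibly non-unital) Banach `*`-algebra of functions, rendered concretely:
for every `a = λ⁻¹ • (f^* ⊛ f)` with `λ ∉ [0,∞)` there is a quasi-inverse `g`
(`a + g = a ⊛ g = g ⊛ a` a.e.), i.e. `σ(f^* ⊛ f) ⊆ [0,∞)` for every `f` in the algebra. -/
def IsSymmetricFunAlg {X : Type*} [MeasurableSpace X] (ν : Measure X)
    (Mem : (X → ℂ) → Prop) (mul : (X → ℂ) → (X → ℂ) → X → ℂ)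
    (star : (X → ℂ) → X → ℂ) : Prop :=
  ∀ f : X → ℂ, Mem f → ∀ lam : ℂ, ¬(lam.im = 0 ∧ 0 ≤ lam.re) →
    ∃ g : X → ℂ, Mem g ∧
      (lam⁻¹ • mul (star f) f + g) =ᵐ[ν] mul (lam⁻¹ • mul (star f) f) g ∧
      (lam⁻¹ • mul (star f) f + g) =ᵐ[ν] mul g (lam⁻¹ • mul (star f) f)

/-- The word-length function associated to a generating set `U` of `G`. -/
def lengthFn (U : Set G) (x : G) : ℝ := (sInf {n : ℕ | x ∈ U ^ n} : ℕ)

/-- `U` is a compact symmetric generating neighbourhood of the identity witnessing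
polynomial growth of order (at most) `d`, with constant `C`. -/
structure IsPolyGrowthGen [TopologicalSpace G] (μ : Measure G) (U : Set G)
    (C : ℝ) (d : ℕ) : Prop where
  compact : IsCompact U
  nhd : U ∈ 𝓝 (1 : G)
  symm : U⁻¹ = U
  generates : (⋃ n : ℕ, U ^ (n + 1)) = Set.univ
  growth : ∀ n : ℕ, μ (U ^ (n + 1)) ≤ ENNReal.ofReal (C * (n + 1 : ℕ) ^ d)



end
noncomputable section

open MeasureTheory Filter ENNReal NNReal Topology

/-- `Λ_ω f = f/ω`. -/
def LamW {G : Type*} (ω : G → ℝ) (f : G → ℂ) : G → ℂ := fun s => f s / (ω s : ℂ)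

/-!
Multiplication by `ω` is inverse to `Λ_ω` and carries `‖·‖_{Φ,ω}` to `‖·‖_Φ`, so completeness,
the isometry, surjectivity and the algebra bound all come from `L^Φ(G)` once `Λ_ω` is known to
intertwine `⊛` and `⊛_T`; that is a pointwise identity between the integrands.

The substance is the completeness of `L^Φ(G)` under the Orlicz norm, for an arbitrary measure.
The usual Riesz–Fischer argument produces the limit; to see that it lies in `L^Φ` one uses that
`‖w‖_Φ < 1` forces `∫ Φ(|w|) ≤ 1` as soon as the support of `w` is σ-finite, which holds here
because every function in `L^Φ` has level sets `{|f| ≥ c}` of finite measure.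
-/

lemma youngConj_le_ofReal {Φ : ℝ → ℝ} {y c : ℝ} (h : ∀ t, 0 ≤ t → t * y - Φ t ≤ c) :
    youngConj Φ y ≤ ENNReal.ofReal c :=
  iSup_le fun t => ENNReal.ofReal_le_ofReal (h t t.2)

namespace IsYoung

variable {Φ : ℝ → ℝ}

lemma convexOn (hΦ : IsYoung Φ) : ConvexOn ℝ (Set.Ici 0) Φ := hΦ.1

lemma map_zero (hΦ : IsYoung Φ) : Φ 0 = 0 := hΦ.2.1

lemma nonneg (hΦ : IsYoung Φ) {x : ℝ} (hx : 0 ≤ x) : 0 ≤ Φ x := hΦ.2.2.2.2.1 x hx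

lemma pos (hΦ : IsYoung Φ) {x : ℝ} (hx : 0 < x) : 0 < Φ x := hΦ.2.2.2.2.2 x hx

lemma le_div_mul (hΦ : IsYoung Φ) {t x : ℝ} (ht : 0 ≤ t) (htx : t ≤ x) (hx : 0 < x) :
    Φ t ≤ t / x * Φ x := by
  have h := hΦ.convexOn.2 Set.self_mem_Ici (Set.mem_Ici.2 hx.le)
    (sub_nonneg.2 ((div_le_one hx).2 htx)) (div_nonneg ht hx.le) (sub_add_cancel 1 (t / x))
  simpa [hΦ.map_zero, div_mul_cancel₀ t hx.ne'] using h

lemma mono (hΦ : IsYoung Φ) {x y : ℝ} (hx : 0 ≤ x) (hxy : x ≤ y) : Φ x ≤ Φ y := by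
  rcases (hx.trans hxy).eq_or_lt with rfl | hy
  · rw [le_antisymm hxy hx]
  · exact (hΦ.le_div_mul hx hxy hy).trans
      (mul_le_of_le_one_left (hΦ.nonneg hy.le) ((div_le_one hy).2 hxy))

lemma youngConj_zero (hΦ : IsYoung Φ) : youngConj Φ 0 = 0 :=
  nonpos_iff_eq_zero.1 <| by
    simpa using youngConj_le_ofReal (c := 0) fun t ht => by simpa using hΦ.nonneg ht

lemma youngConj_div_le (hΦ : IsYoung Φ) {c : ℝ} (hc : 1 ≤ c) (y : ℝ) :
    youngConj Φ (y / c) ≤ youngConj Φ y / ENNReal.ofReal c := by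
  have hc0 : 0 < c := one_pos.trans_le hc
  refine iSup_le fun t => ?_
  have key : (t : ℝ) * (y / c) - Φ t ≤ ((t : ℝ) * y - Φ t) / c := by
    rw [le_div_iff₀ hc0, sub_mul, mul_assoc, div_mul_cancel₀ y hc0.ne']
    nlinarith [hΦ.nonneg t.2]
  calc ENNReal.ofReal ((t : ℝ) * (y / c) - Φ t)
      ≤ ENNReal.ofReal ((t : ℝ) * y - Φ t) / ENNReal.ofReal c := by
        rw [← ENNReal.ofReal_div_of_pos hc0]
        exact ENNReal.ofReal_le_ofReal key
    _ ≤ youngConj Φ y / ENNReal.ofReal c :=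
        ENNReal.div_le_div_right (le_iSup (fun t : Set.Ici (0 : ℝ) => _) t) _

lemma youngConj_div_self_le (hΦ : IsYoung Φ) {x : ℝ} (hx : 0 < x) :
    youngConj Φ (Φ x / x) ≤ ENNReal.ofReal (Φ x) := by
  refine youngConj_le_ofReal fun t ht => ?_
  rcases le_or_gt t x with htx | hxt
  · have : t * (Φ x / x) ≤ Φ x := by
      rw [mul_div_assoc', div_le_iff₀ hx, mul_comm (Φ x)]
      exact mul_le_mul_of_nonneg_right htx (hΦ.nonneg hx.le)
    linarith [hΦ.nonneg ht]
  · have hslope := hΦ.le_div_mul hx.le hxt.le (hx.trans hxt)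
    have : t * (Φ x / x) ≤ Φ t := by
      rw [mul_div_assoc', div_le_iff₀ hx]
      rw [div_mul_eq_mul_div, le_div_iff₀ (hx.trans hxt)] at hslope
      linarith
    linarith [hΦ.nonneg hx.le]

lemma continuous_comp_max (hΦ : IsYoung Φ) : Continuous fun x => Φ (max x 0) :=
  hΦ.2.2.2.1.comp_continuous (continuous_id.max continuous_const) fun x => le_max_right x 0

variable {G : Type*} [MeasurableSpace G] {μ : Measure G} {f : G → ℝ}

lemma measurable_comp (hΦ : IsYoung Φ) (hf : Measurable f) (h0 : ∀ s, 0 ≤ f s) :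
    Measurable fun s => Φ (f s) := by
  simpa only [Function.comp_def, max_eq_left (h0 _)] using
    hΦ.continuous_comp_max.measurable.comp hf

lemma aemeasurable_comp (hΦ : IsYoung Φ) (hf : AEMeasurable f μ) (h0 : ∀ s, 0 ≤ f s) :
    AEMeasurable (fun s => Φ (f s)) μ := by
  simpa only [Function.comp_def, max_eq_left (h0 _)] using
    hΦ.continuous_comp_max.measurable.comp_aemeasurable hf

end IsYoung

section OrliczNorm

variable {G : Type*} [MeasurableSpace G] {μ : Measure G} {Φ : ℝ → ℝ} {f g : G → ℂ}

lemma le_orliczNorm (f : G → ℂ) {v : G → ℝ} (hv : Measurable v)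
    (hΨ : ∫⁻ s, youngConj Φ |v s| ∂μ ≤ 1) :
    ∫⁻ s, ‖f s‖ₑ * ‖v s‖ₑ ∂μ ≤ orliczNorm μ Φ f :=
  le_iSup₂ (f := fun v _ => ∫⁻ s, ‖f s‖ₑ * ‖v s‖ₑ ∂μ) v ⟨hv, hΨ⟩

lemma orliczNorm_le {B : ℝ≥0∞}
    (h : ∀ v : G → ℝ, Measurable v → ∫⁻ s, youngConj Φ |v s| ∂μ ≤ 1 →
      ∫⁻ s, ‖f s‖ₑ * ‖v s‖ₑ ∂μ ≤ B) :
    orliczNorm μ Φ f ≤ B :=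
  iSup₂_le fun v hv => h v hv.1 hv.2

lemma orliczNorm_mono_ae (h : ∀ᵐ s ∂μ, ‖f s‖ ≤ ‖g s‖) : orliczNorm μ Φ f ≤ orliczNorm μ Φ g :=
  orliczNorm_le fun v hv hΨ => (lintegral_mono_ae <| h.mono fun s hs => by
    gcongr; exact enorm_le_iff_norm_le.2 hs).trans (le_orliczNorm g hv hΨ)

lemma orliczNorm_congr_ae (h : f =ᵐ[μ] g) : orliczNorm μ Φ f = orliczNorm μ Φ g :=
  (orliczNorm_mono_ae (h.mono fun _ hs => hs ▸ le_rfl)).antisymm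
    (orliczNorm_mono_ae (h.mono fun _ hs => hs ▸ le_rfl))

lemma orliczNorm_add_le (hf : AEMeasurable f μ) :
    orliczNorm μ Φ (f + g) ≤ orliczNorm μ Φ f + orliczNorm μ Φ g := by
  refine orliczNorm_le fun v hv hΨ => ?_
  calc ∫⁻ s, ‖(f + g) s‖ₑ * ‖v s‖ₑ ∂μ ≤ ∫⁻ s, (‖f s‖ₑ * ‖v s‖ₑ + ‖g s‖ₑ * ‖v s‖ₑ) ∂μ :=
        lintegral_mono fun s => by rw [← add_mul]; gcongr; exact enorm_add_le _ _
    _ = ∫⁻ s, ‖f s‖ₑ * ‖v s‖ₑ ∂μ + ∫⁻ s, ‖g s‖ₑ * ‖v s‖ₑ ∂μ :=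
        lintegral_add_left' (hf.enorm.mul hv.enorm.aemeasurable) _
    _ ≤ orliczNorm μ Φ f + orliczNorm μ Φ g :=
        add_le_add (le_orliczNorm f hv hΨ) (le_orliczNorm g hv hΨ)

lemma orliczNorm_const_mul_le (c : ℂ) (f : G → ℂ) :
    orliczNorm μ Φ (fun s => c * f s) ≤ ‖c‖ₑ * orliczNorm μ Φ f := by
  refine orliczNorm_le fun v hv hΨ => ?_
  simp_rw [enorm_mul, mul_assoc]
  rw [lintegral_const_mul' _ _ enorm_ne_top]
  gcongr
  exact le_orliczNorm f hv hΨ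

lemma orliczNorm_le_tsum {D : ℕ → G → ℂ} (hD : ∀ i, AEMeasurable (D i) μ)
    (h : ∀ s, ‖f s‖ₑ ≤ ∑' i, ‖D i s‖ₑ) :
    orliczNorm μ Φ f ≤ ∑' i, orliczNorm μ Φ (D i) := by
  refine orliczNorm_le fun v hv hΨ => ?_
  calc ∫⁻ s, ‖f s‖ₑ * ‖v s‖ₑ ∂μ ≤ ∫⁻ s, ∑' i, ‖D i s‖ₑ * ‖v s‖ₑ ∂μ :=
        lintegral_mono fun s => by rw [ENNReal.tsum_mul_right]; gcongr; exact h s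
    _ = ∑' i, ∫⁻ s, ‖D i s‖ₑ * ‖v s‖ₑ ∂μ :=
        lintegral_tsum fun i => (hD i).enorm.mul hv.enorm.aemeasurable
    _ ≤ ∑' i, orliczNorm μ Φ (D i) := ENNReal.tsum_le_tsum fun i => le_orliczNorm _ hv hΨ

end OrliczNorm

section Modular

variable {G : Type*} [MeasurableSpace G] {μ : Measure G} {Φ : ℝ → ℝ} {f w : G → ℂ}

/-- The test function is `v = Φ(|f|) / (|f| ∫ Φ(|f|))`: by the Young equality case
`youngConj_div_self_le` it is admissible, and it pairs with `f` to exactly `1`. -/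
lemma one_le_orliczNorm_of_one_le_lintegral (hΦ : IsYoung Φ) (hf : Measurable f)
    (h1 : 1 ≤ ∫⁻ s, ENNReal.ofReal (Φ ‖f s‖) ∂μ)
    (hfin : ∫⁻ s, ENNReal.ofReal (Φ ‖f s‖) ∂μ ≠ ∞) :
    1 ≤ orliczNorm μ Φ f := by
  set I := ∫⁻ s, ENNReal.ofReal (Φ ‖f s‖) ∂μ
  have hI0 : I ≠ 0 := (zero_lt_one.trans_le h1).ne'
  set c := I.toReal
  have hc : 1 ≤ c := by simpa using ENNReal.toReal_mono hfin h1
  have hcI : ENNReal.ofReal c = I := ENNReal.ofReal_toReal hfin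
  set v : G → ℝ := fun s => Φ ‖f s‖ / ‖f s‖ / c
  have hv : Measurable v :=
    ((hΦ.measurable_comp hf.norm fun _ => norm_nonneg _).div hf.norm).div_const c
  have hv0 : ∀ s, 0 ≤ v s := fun s => by positivity [hΦ.nonneg (norm_nonneg (f s))]
  have hΨ : ∀ s, youngConj Φ |v s| ≤ ENNReal.ofReal (Φ ‖f s‖) / I := fun s => by
    rw [abs_of_nonneg (hv0 s)]
    rcases (norm_nonneg (f s)).eq_or_lt with h0 | hpos
    · simp [v, ← h0, hΦ.youngConj_zero]
    · calc youngConj Φ (Φ ‖f s‖ / ‖f s‖ / c)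
          ≤ youngConj Φ (Φ ‖f s‖ / ‖f s‖) / ENNReal.ofReal c := hΦ.youngConj_div_le hc _
        _ ≤ ENNReal.ofReal (Φ ‖f s‖) / I := by
          rw [hcI]; gcongr; exact hΦ.youngConj_div_self_le hpos
  have hpair : ∀ s, ‖f s‖ₑ * ‖v s‖ₑ = ENNReal.ofReal (Φ ‖f s‖) / I := fun s => by
    rcases (norm_nonneg (f s)).eq_or_lt with h0 | hpos
    · simp [v, ← h0, hΦ.map_zero, enorm_eq_zero.2 (norm_eq_zero.1 h0.symm)]
    · rw [← ofReal_norm, Real.enorm_of_nonneg (hv0 s), ← ENNReal.ofReal_mul (norm_nonneg _),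
        ← hcI, ← ENNReal.ofReal_div_of_pos (by linarith)]
      congr 1
      change ‖f s‖ * (Φ ‖f s‖ / ‖f s‖ / c) = Φ ‖f s‖ / c
      field_simp
  have hint : ∫⁻ s, ENNReal.ofReal (Φ ‖f s‖) / I ∂μ = 1 := by
    simp_rw [div_eq_mul_inv]
    rw [lintegral_mul_const' _ _ (ENNReal.inv_ne_top.2 hI0), ENNReal.mul_inv_cancel hI0 hfin]
  calc 1 = ∫⁻ s, ‖f s‖ₑ * ‖v s‖ₑ ∂μ := by simp_rw [hpair, hint]
    _ ≤ orliczNorm μ Φ f := le_orliczNorm f hv ((lintegral_mono hΨ).trans hint.le)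

lemma lintegral_ofReal_comp_norm_ne_top (hΦ : IsYoung Φ) {B : Set G} (hB : μ B ≠ ∞)
    (hwB : Function.support w ⊆ B) {c : ℝ} (hwc : ∀ s, ‖w s‖ ≤ c) :
    ∫⁻ s, ENNReal.ofReal (Φ ‖w s‖) ∂μ ≠ ∞ := by
  refine ne_top_of_le_ne_top (ENNReal.mul_ne_top ENNReal.ofReal_ne_top hB)
    ((lintegral_mono fun s => ?_).trans (lintegral_indicator_const_le B (ENNReal.ofReal (Φ c))))
  by_cases hs : s ∈ B
  · rw [Set.indicator_of_mem hs]
    exact ENNReal.ofReal_le_ofReal (hΦ.mono (norm_nonneg _) (hwc s))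
  · simp [Function.notMem_support.1 (mt (@hwB s) hs), hΦ.map_zero]

/-- Truncating `w` to `{|w| ≤ j}` and to the `j`-th spanning set of the σ-finite part gives
functions of finite modular, to which the previous lemma applies; Fatou then passes to `w`. -/
lemma lintegral_le_one_of_orliczNorm_lt_one (hΦ : IsYoung Φ) (hw : Measurable w) {A : Set G}
    [SigmaFinite (μ.restrict A)] (hwA : Function.support w ⊆ A) (hN : orliczNorm μ Φ w < 1) :
    ∫⁻ s, ENNReal.ofReal (Φ ‖w s‖) ∂μ ≤ 1 := by
  set F : ℕ → Set G := fun j => spanningSets (μ.restrict A) j ∩ {s | ‖w s‖ ≤ j}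
  set u : ℕ → G → ℂ := fun j => (F j).indicator w
  have hu : ∀ j, Measurable (u j) := fun j => hw.indicator
    ((measurableSet_spanningSets _ j).inter (measurableSet_le hw.norm measurable_const))
  have hu_le : ∀ j, ∫⁻ s, ENNReal.ofReal (Φ ‖u j s‖) ∂μ ≤ 1 := fun j => by
    have hfin : ∫⁻ s, ENNReal.ofReal (Φ ‖u j s‖) ∂μ ≠ ∞ := by
      have huB : Function.support (u j) ⊆ spanningSets (μ.restrict A) j ∩ A := fun s hs => by
        rw [Set.support_indicator] at hs
        exact ⟨hs.1.1, hwA hs.2⟩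
      refine lintegral_ofReal_comp_norm_ne_top hΦ ?_ huB (c := j) fun s => ?_
      · rw [← Measure.restrict_apply (measurableSet_spanningSets _ j)]
        exact (measure_spanningSets_lt_top _ j).ne
      · by_cases hs : s ∈ F j
        · simpa [u, hs] using hs.2
        · simp [u, hs]
    have hmono : orliczNorm μ Φ (u j) ≤ orliczNorm μ Φ w :=
      orliczNorm_mono_ae (Eventually.of_forall fun s => norm_indicator_le_norm_self w s)
    by_contra! h
    exact (hmono.trans_lt hN).not_ge (one_le_orliczNorm_of_one_le_lintegral hΦ (hu j) h.le hfin)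
  have hlim : ∀ s, ∀ᶠ j in atTop, u j s = w s := fun s => by
    filter_upwards [eventually_ge_atTop (spanningSetsIndex (μ.restrict A) s),
      eventually_ge_atTop ⌈‖w s‖⌉₊] with j hj hj'
    exact Set.indicator_of_mem (s := F j)
      ⟨monotone_spanningSets _ hj (mem_spanningSetsIndex _ s), Nat.ceil_le.1 hj'⟩ w
  calc ∫⁻ s, ENNReal.ofReal (Φ ‖w s‖) ∂μ
      = ∫⁻ s, liminf (fun j => ENNReal.ofReal (Φ ‖u j s‖)) atTop ∂μ :=
        lintegral_congr fun s => (tendsto_const_nhds.congr' <|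
          (hlim s).mono fun j hj => by rw [hj]).liminf_eq.symm
    _ ≤ liminf (fun j => ∫⁻ s, ENNReal.ofReal (Φ ‖u j s‖) ∂μ) atTop :=
        lintegral_liminf_le' fun j => ENNReal.measurable_ofReal.comp_aemeasurable
          (hΦ.measurable_comp (hu j).norm fun _ => norm_nonneg _).aemeasurable
    _ ≤ 1 := liminf_le_of_frequently_le' (Frequently.of_forall hu_le)

lemma memOrlicz_of_orliczNorm_ne_top (hΦ : IsYoung Φ) (hw : Measurable w) {A : Set G}
    [SigmaFinite (μ.restrict A)] (hwA : Function.support w ⊆ A) (hN : orliczNorm μ Φ w ≠ ∞) :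
    MemOrlicz μ Φ w := by
  obtain ⟨x, hx, hNx⟩ : ∃ x : ℝ, 0 ≤ x ∧ orliczNorm μ Φ w = ENNReal.ofReal x :=
    ⟨_, ENNReal.toReal_nonneg, (ENNReal.ofReal_toReal hN).symm⟩
  set c : ℝ := (x + 1)⁻¹
  have hc : 0 < c := by positivity
  have hnorm (z : ℂ) : ‖(c : ℂ) * z‖ = c * ‖z‖ := by
    rw [norm_mul, Complex.norm_real, Real.norm_of_nonneg hc.le]
  have hscaled : orliczNorm μ Φ (fun s => (c : ℂ) * w s) < 1 := by
    refine (orliczNorm_const_mul_le _ w).trans_lt ?_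
    rw [hNx, ← ofReal_norm, Complex.norm_real, Real.norm_of_nonneg hc.le,
      ← ENNReal.ofReal_mul hc.le, ENNReal.ofReal_lt_one, inv_mul_lt_iff₀ (by positivity)]
    linarith
  refine ⟨hw.aestronglyMeasurable, c, hc, ?_⟩
  simpa only [hnorm] using (lintegral_le_one_of_orliczNorm_lt_one hΦ (w := fun s => (c : ℂ) * w s)
    (measurable_const.mul hw)
    (fun s hs => hwA (right_ne_zero_of_mul hs)) hscaled).trans_lt ENNReal.one_lt_top

end Modular

section MemOrlicz

variable {G : Type*} [MeasurableSpace G] {μ : Measure G} {Φ : ℝ → ℝ} {f g : G → ℂ}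

lemma MemOrlicz.congr_ae (hf : MemOrlicz μ Φ f) (h : f =ᵐ[μ] g) : MemOrlicz μ Φ g := by
  obtain ⟨hfm, α, hα, hint⟩ := hf
  refine ⟨hfm.congr h, α, hα, ?_⟩
  have hfg : (fun s => ENNReal.ofReal (Φ (α * ‖f s‖))) =ᵐ[μ]
      fun s => ENNReal.ofReal (Φ (α * ‖g s‖)) := h.mono fun s hs => by simp only [hs]
  rwa [← lintegral_congr_ae hfg]

lemma MemOrlicz.measure_le_norm_lt_top (hΦ : IsYoung Φ) (hf : MemOrlicz μ Φ f) {c : ℝ}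
    (hc : 0 < c) : μ {s | c ≤ ‖f s‖} < ∞ := by
  obtain ⟨hfm, α, hα, hint⟩ := hf
  have hΦc : ENNReal.ofReal (Φ (α * c)) ≠ 0 := by
    simpa using hΦ.pos (mul_pos hα hc)
  calc μ {s | c ≤ ‖f s‖}
      ≤ μ {s | ENNReal.ofReal (Φ (α * c)) ≤ ENNReal.ofReal (Φ (α * ‖f s‖))} :=
        measure_mono fun s hs => ENNReal.ofReal_le_ofReal <|
          hΦ.mono (by positivity) (by gcongr; exact hs)
    _ ≤ (∫⁻ s, ENNReal.ofReal (Φ (α * ‖f s‖)) ∂μ) / ENNReal.ofReal (Φ (α * c)) :=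
        meas_ge_le_lintegral_div (ENNReal.measurable_ofReal.comp_aemeasurable <|
          hΦ.aemeasurable_comp (hfm.aemeasurable.norm.const_mul α) fun _ => by positivity)
          hΦc ENNReal.ofReal_ne_top
    _ < ∞ := ENNReal.div_lt_top hint.ne hΦc

lemma memOrlicz_add (hΦ : IsYoung Φ) (hf : MemOrlicz μ Φ f) (hg : MemOrlicz μ Φ g) :
    MemOrlicz μ Φ (f + g) := by
  obtain ⟨hfm, α, hα, hfint⟩ := hf
  obtain ⟨hgm, β, hβ, hgint⟩ := hg
  refine ⟨hfm.add hgm, min α β / 2, by positivity, ?_⟩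
  have hpt : ∀ s, Φ (min α β / 2 * ‖(f + g) s‖) ≤ Φ (α * ‖f s‖) + Φ (β * ‖g s‖) := fun s => by
    have ha : 0 ≤ α * ‖f s‖ := by positivity
    have hb : 0 ≤ β * ‖g s‖ := by positivity
    have hle : min α β / 2 * ‖(f + g) s‖ ≤ 2⁻¹ * (α * ‖f s‖) + 2⁻¹ * (β * ‖g s‖) := by
      have := norm_add_le (f s) (g s)
      have := min_le_left α β
      have := min_le_right α β
      have : 0 ≤ min α β := le_min hα.le hβ.le
      rw [Pi.add_apply]
      nlinarith [norm_nonneg (f s), norm_nonneg (g s)]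
    have hconv : Φ (2⁻¹ * (α * ‖f s‖) + 2⁻¹ * (β * ‖g s‖)) ≤
        2⁻¹ * Φ (α * ‖f s‖) + 2⁻¹ * Φ (β * ‖g s‖) :=
      hΦ.convexOn.2 ha hb (by norm_num) (by norm_num) (by norm_num)
    linarith [hΦ.mono (by positivity) hle, hΦ.nonneg ha, hΦ.nonneg hb]
  calc ∫⁻ s, ENNReal.ofReal (Φ (min α β / 2 * ‖(f + g) s‖)) ∂μ
      ≤ ∫⁻ s, (ENNReal.ofReal (Φ (α * ‖f s‖)) + ENNReal.ofReal (Φ (β * ‖g s‖))) ∂μ :=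
        lintegral_mono fun s => (ENNReal.ofReal_le_ofReal (hpt s)).trans ENNReal.ofReal_add_le
    _ = ∫⁻ s, ENNReal.ofReal (Φ (α * ‖f s‖)) ∂μ + ∫⁻ s, ENNReal.ofReal (Φ (β * ‖g s‖)) ∂μ :=
        lintegral_add_left' (ENNReal.measurable_ofReal.comp_aemeasurable <|
          hΦ.aemeasurable_comp (hfm.aemeasurable.norm.const_mul α) fun _ => by positivity) _
    _ < ∞ := ENNReal.add_lt_top.2 ⟨hfint, hgint⟩

lemma sigmaFinite_restrict_iUnion_support (hΦ : IsYoung Φ) {H : ℕ → G → ℂ}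
    (hHm : ∀ n, Measurable (H n)) (hH : ∀ n, MemOrlicz μ Φ (H n)) :
    SigmaFinite (μ.restrict (⋃ n, Function.support (H n))) := by
  set A := ⋃ n, Function.support (H n)
  have hA : MeasurableSet A := MeasurableSet.iUnion fun n => measurableSet_support (hHm n)
  refine Measure.sigmaFinite_of_countable (S := insert Aᶜ
    (Set.range fun p : ℕ × ℕ => {s | 1 / ((p.2 : ℝ) + 1) ≤ ‖H p.1 s‖}))
    ((Set.countable_range _).insert _) ?_ ?_
  · rintro _ (rfl | ⟨⟨n, k⟩, rfl⟩)
    · simp [Measure.restrict_apply hA.compl]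
    · exact (Measure.restrict_apply_le _ _).trans_lt
        ((hH n).measure_le_norm_lt_top hΦ (by positivity))
  · refine Set.eq_univ_of_forall fun s => ?_
    by_cases hs : s ∈ A
    · obtain ⟨n, hn⟩ := Set.mem_iUnion.1 hs
      obtain ⟨k, hk⟩ := exists_nat_one_div_lt (norm_pos_iff.2 hn)
      exact Set.mem_sUnion_of_mem hk.le (Set.mem_insert_of_mem _ ⟨(n, k), rfl⟩)
    · exact Set.mem_sUnion_of_mem hs (Set.mem_insert _ _)

end MemOrlicz

lemma enorm_sum_range_sub_tsum_le {β : Type*} [NormedAddCommGroup β] [CompleteSpace β]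
    (a : ℕ → β) (k : ℕ) :
    ‖∑ i ∈ Finset.range k, a i - ∑' i, a i‖ₑ ≤ ∑' i, ‖a (i + k)‖ₑ := by
  by_cases htail : ∑' i, ‖a (i + k)‖ₑ = ∞
  · exact htail ▸ le_top
  have hsum : Summable fun i => ‖a i‖ :=
    (_root_.summable_nat_add_iff k).1 (tsum_enorm_ne_top_iff_summable_norm.1 htail)
  rw [← hsum.of_norm.sum_add_tsum_nat_add k, sub_add_cancel_left, enorm_neg]
  exact enorm_tsum_le_tsum_enorm

section Completeness

variable {G : Type*} [MeasurableSpace G] {μ : Measure G} {Φ : ℝ → ℝ}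

lemma memOrlicz_tsum (hΦ : IsYoung Φ) {D : ℕ → G → ℂ} (hD : ∀ i, Measurable (D i)) {A : Set G}
    [SigmaFinite (μ.restrict A)] (hDA : ∀ i, Function.support (D i) ⊆ A)
    (hsum : ∑' i, orliczNorm μ Φ (D i) ≠ ∞) :
    MemOrlicz μ Φ fun s => ∑' i, D i s := by
  refine memOrlicz_of_orliczNorm_ne_top hΦ (Measurable.tsum hD) (A := A) (fun s hs => ?_)
    (ne_top_of_le_ne_top hsum (orliczNorm_le_tsum (fun i => (hD i).aemeasurable)
      fun _ => enorm_tsum_le_tsum_enorm))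
  by_contra hsA
  exact hs (by simp [fun i => Function.notMem_support.1 (mt (@hDA i s) hsA)])

lemma tendsto_orliczNorm_sub_of_subseq {H : ℕ → G → ℂ} {g : G → ℂ}
    (hH : ∀ n, AEMeasurable (H n) μ) {φ : ℕ → ℕ} {r : ℕ → ℝ≥0∞} (hr : Tendsto r atTop (𝓝 0))
    (hHφ : ∀ k, ∀ n ≥ φ k, orliczNorm μ Φ (H n - H (φ k)) ≤ r k)
    (hφg : ∀ k, orliczNorm μ Φ (H (φ k) - g) ≤ r k) :
    Tendsto (fun n => orliczNorm μ Φ (H n - g)) atTop (𝓝 0) := by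
  refine ENNReal.tendsto_atTop_zero.2 fun ε hε => ?_
  have h2r : Tendsto (fun k => 2 * r k) atTop (𝓝 0) := by
    simpa using ENNReal.Tendsto.const_mul hr (.inr ENNReal.ofNat_ne_top)
  obtain ⟨k, hk⟩ := (h2r.eventually_lt_const hε).exists
  refine ⟨φ k, fun n hn => le_of_lt ?_⟩
  calc orliczNorm μ Φ (H n - g) = orliczNorm μ Φ ((H n - H (φ k)) + (H (φ k) - g)) := by
        rw [sub_add_sub_cancel]
    _ ≤ r k + r k :=
        (orliczNorm_add_le ((hH n).sub (hH _))).trans (add_le_add (hHφ k n hn) (hφg k))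
    _ < ε := by rwa [← two_mul]

/-- Riesz–Fischer: along a subsequence with `‖H (φ (i+1)) - H (φ i)‖_Φ < 2⁻ⁱ` the differences
are summed pointwise, and the countable triangle inequality bounds the tails in norm. -/
lemma exists_tendsto_orliczNorm_of_cauchy_of_measurable (hΦ : IsYoung Φ) (H : ℕ → G → ℂ)
    (hHm : ∀ n, Measurable (H n)) (hH : ∀ n, MemOrlicz μ Φ (H n))
    (hcau : ∀ ε : ℝ≥0∞, 0 < ε → ∃ N : ℕ, ∀ m ≥ N, ∀ n ≥ N, orliczNorm μ Φ (H m - H n) < ε) :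
    ∃ g : G → ℂ, MemOrlicz μ Φ g ∧ Tendsto (fun n => orliczNorm μ Φ (H n - g)) atTop (𝓝 0) := by
  obtain ⟨φ, hφ_mono, hφ⟩ := extraction_forall_of_eventually'
    (P := fun k N => ∀ m ≥ N, ∀ n ≥ N, orliczNorm μ Φ (H m - H n) < 2⁻¹ ^ k) fun k => by
      obtain ⟨N, hN⟩ := hcau (2⁻¹ ^ k) (ENNReal.pow_pos (by norm_num) k)
      exact ⟨N, fun N' hN' m hm n hn => hN m (hN'.trans hm) n (hN'.trans hn)⟩
  set D : ℕ → G → ℂ := fun i => H (φ (i + 1)) - H (φ i)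
  have hDm : ∀ i, Measurable (D i) := fun i => (hHm _).sub (hHm _)
  have hD : ∀ i, orliczNorm μ Φ (D i) ≤ 2⁻¹ ^ i := fun i =>
    (hφ i _ (hφ_mono.monotone i.le_succ) _ le_rfl).le
  set S : G → ℂ := fun s => ∑' i, D i s
  set g := H (φ 0) + S
  have hsub : ∀ k s, (H (φ k) - g) s = ∑ i ∈ Finset.range k, D i s - S s := fun k s => by
    have htele : ∑ i ∈ Finset.range k, D i s = H (φ k) s - H (φ 0) s :=
      Finset.sum_range_sub (fun i => H (φ i) s) k
    rw [htele]
    change H (φ k) s - (H (φ 0) s + S s) = _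
    ring
  have htail : ∀ k, orliczNorm μ Φ (H (φ k) - g) ≤ 2 * 2⁻¹ ^ k := fun k => calc
    orliczNorm μ Φ (H (φ k) - g) ≤ ∑' i, orliczNorm μ Φ (D (i + k)) :=
      orliczNorm_le_tsum (fun i => (hDm _).aemeasurable) fun s => by
        rw [hsub]; exact enorm_sum_range_sub_tsum_le (D · s) k
    _ ≤ ∑' i, 2⁻¹ ^ (i + k) := ENNReal.tsum_le_tsum fun i => hD _
    _ = 2 * 2⁻¹ ^ k := by
      simp_rw [pow_add, ENNReal.tsum_mul_right, ENNReal.tsum_geometric, ENNReal.one_sub_inv_two,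
        inv_inv]
  have hS : MemOrlicz μ Φ S := by
    have := sigmaFinite_restrict_iUnion_support hΦ hHm hH
    refine memOrlicz_tsum hΦ hDm (A := ⋃ n, Function.support (H n)) (fun i s hs => ?_)
      (ne_top_of_le_ne_top (b := 2) (by simp) ((ENNReal.tsum_le_tsum hD).trans_eq (by simp)))
    by_contra h
    simp only [Set.mem_iUnion, Function.mem_support, not_exists, not_not] at h
    exact hs (by simp [D, h])
  refine ⟨g, memOrlicz_add hΦ (hH _) hS, tendsto_orliczNorm_sub_of_subseq
    (fun n => (hHm n).aemeasurable) (r := fun k => 2 * 2⁻¹ ^ k) ?_ (fun k n hn => ?_) htail⟩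
  · simpa using ENNReal.Tendsto.const_mul
      (ENNReal.tendsto_pow_atTop_nhds_zero_of_lt_one (by norm_num)) (.inr ENNReal.ofNat_ne_top)
  · exact (hφ k n hn _ le_rfl).le.trans (le_mul_of_one_le_left' one_le_two)

end Completeness

lemma exists_tendsto_orliczNorm_of_cauchy {G : Type*} [MeasurableSpace G] {μ : Measure G}
    {Φ : ℝ → ℝ} (hΦ : IsYoung Φ) (H : ℕ → G → ℂ) (hH : ∀ n, MemOrlicz μ Φ (H n))
    (hcau : ∀ ε : ℝ≥0∞, 0 < ε → ∃ N : ℕ, ∀ m ≥ N, ∀ n ≥ N, orliczNorm μ Φ (H m - H n) < ε) :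
    ∃ g : G → ℂ, MemOrlicz μ Φ g ∧ Tendsto (fun n => orliczNorm μ Φ (H n - g)) atTop (𝓝 0) := by
  have hae : ∀ n, (hH n).1.mk (H n) =ᵐ[μ] H n := fun n => (hH n).1.ae_eq_mk.symm
  have hnorm : ∀ n g, orliczNorm μ Φ ((hH n).1.mk (H n) - g) = orliczNorm μ Φ (H n - g) :=
    fun n g => orliczNorm_congr_ae ((hae n).sub EventuallyEq.rfl)
  obtain ⟨g, hg, hlim⟩ := exists_tendsto_orliczNorm_of_cauchy_of_measurable hΦ _
    (fun n => (hH n).1.stronglyMeasurable_mk.measurable) (fun n => (hH n).congr_ae (hae n).symm)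
    fun ε hε => by
      simpa only [hnorm, orliczNorm_congr_ae (EventuallyEq.rfl.sub (hae _))] using hcau ε hε
  exact ⟨g, hg, by simpa only [hnorm] using hlim⟩

section Weighted

variable {G : Type*} {ω : G → ℝ}

lemma LamW_mul_weight (hω : ∀ s, ω s ≠ 0) (f : G → ℂ) :
    (fun s => LamW ω f s * (ω s : ℂ)) = f :=
  funext fun s => div_mul_cancel₀ _ (Complex.ofReal_ne_zero.2 (hω s))

lemma LamW_of_mul_weight (hω : ∀ s, ω s ≠ 0) (f : G → ℂ) :
    LamW ω (fun s => f s * (ω s : ℂ)) = f :=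
  funext fun s => mul_div_cancel_right₀ _ (Complex.ofReal_ne_zero.2 (hω s))

lemma LamW_sub (f g : G → ℂ) : LamW ω (f - g) = LamW ω f - LamW ω g :=
  funext fun _ => sub_div _ _ _

variable [MeasurableSpace G] {μ : Measure G} {Φ : ℝ → ℝ}

lemma memWOrlicz_LamW_iff (hω : ∀ s, ω s ≠ 0) {f : G → ℂ} :
    MemWOrlicz μ Φ ω (LamW ω f) ↔ MemOrlicz μ Φ f := by
  rw [MemWOrlicz, LamW_mul_weight hω]

lemma wOrliczNorm_LamW (hω : ∀ s, ω s ≠ 0) (f : G → ℂ) :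
    wOrliczNorm μ Φ ω (LamW ω f) = orliczNorm μ Φ f := by
  rw [wOrliczNorm, LamW_mul_weight hω]

lemma exists_tendsto_wOrliczNorm_of_cauchy (hΦ : IsYoung Φ) (hω : ∀ s, ω s ≠ 0)
    (F : ℕ → G → ℂ) (hF : ∀ n, MemWOrlicz μ Φ ω (F n))
    (hcau : ∀ ε : ℝ≥0∞, 0 < ε → ∃ N : ℕ, ∀ m ≥ N, ∀ n ≥ N, wOrliczNorm μ Φ ω (F m - F n) < ε) :
    ∃ g : G → ℂ, MemWOrlicz μ Φ ω g ∧
      Tendsto (fun n => wOrliczNorm μ Φ ω (F n - g)) atTop (𝓝 0) := by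
  obtain ⟨H, rfl⟩ : ∃ H : ℕ → G → ℂ, (fun n => LamW ω (H n)) = F :=
    ⟨_, funext fun n => LamW_of_mul_weight hω (F n)⟩
  simp only [← LamW_sub, wOrliczNorm_LamW hω, memWOrlicz_LamW_iff hω] at hF hcau
  obtain ⟨g, hg, hlim⟩ := exists_tendsto_orliczNorm_of_cauchy hΦ H hF hcau
  exact ⟨LamW ω g, (memWOrlicz_LamW_iff hω).2 hg, by
    simpa only [← LamW_sub, wOrliczNorm_LamW hω] using hlim⟩

variable [Group G] {Ω : G × G → ℂ}

/-- Since `|Ω(s, s⁻¹t)| = ω(t) / (ω(s) ω(s⁻¹t))`, dividing the integrand of `f ⊛ g` by `ω(t)`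
turns `Ω` into its circle part. -/
lemma LamW_twConv (μ : Measure G) (hω : ∀ s, ω s ≠ 0) (hΩω : IsCoboundaryOf Ω ω) (f g : G → ℂ) :
    LamW ω (twConv μ Ω f g) = twConv μ (circlePart Ω) (LamW ω f) (LamW ω g) := by
  funext t
  simp only [LamW, twConv, ← integral_div]
  congr 1
  funext s
  have hnorm := hΩω s (s⁻¹ * t)
  rw [mul_inv_cancel_left] at hnorm
  have hc : ∀ r, (ω r : ℂ) ≠ 0 := fun r => Complex.ofReal_ne_zero.2 (hω r)
  have := hc s; have := hc t; have := hc (s⁻¹ * t)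
  simp only [circlePart, hnorm]
  push_cast
  field_simp

lemma IsTwistedOrliczAlgebra.exists_wOrliczNorm_twConv_circlePart_le
    (hΩ : IsTwistedOrliczAlgebra μ Φ Ω) (hω : ∀ s, ω s ≠ 0) (hΩω : IsCoboundaryOf Ω ω) :
    ∃ C : ℝ≥0∞, 0 < C ∧ C ≠ ⊤ ∧ ∀ f g : G → ℂ,
      MemWOrlicz μ Φ ω f → MemWOrlicz μ Φ ω g →
        MemWOrlicz μ Φ ω (twConv μ (circlePart Ω) f g) ∧
        wOrliczNorm μ Φ ω (twConv μ (circlePart Ω) f g) ≤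
          C * wOrliczNorm μ Φ ω f * wOrliczNorm μ Φ ω g := by
  obtain ⟨C, hC0, hCtop, hC⟩ := hΩ
  refine ⟨C, hC0, hCtop, fun f g hf hg => ?_⟩
  rw [← LamW_of_mul_weight hω f, ← LamW_of_mul_weight hω g, ← LamW_twConv μ hω hΩω,
    memWOrlicz_LamW_iff hω, wOrliczNorm_LamW hω, wOrliczNorm_LamW hω, wOrliczNorm_LamW hω]
  exact hC _ _ hf hg

end Weighted

theorem weighted_orlicz_transfer_general
    {G : Type*} [Group G] [TopologicalSpace G]
    [MeasurableSpace G]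
    (μ : Measure G)
    (Φ : ℝ → ℝ) (hΦ : IsYoung Φ)
    (Ω : G × G → ℂ)
    (ω : G → ℝ) (hω : IsWeight μ ω) (hΩω : IsCoboundaryOf Ω ω) :
    -- `L^Φ_ω(G)` is a Banach space (sequential completeness in `‖·‖_{Φ,ω}`)
    (∀ F : ℕ → G → ℂ, (∀ n, MemWOrlicz μ Φ ω (F n)) →
      (∀ ε : ℝ≥0∞, 0 < ε → ∃ N : ℕ, ∀ m ≥ N, ∀ n ≥ N,
        wOrliczNorm μ Φ ω (F m - F n) < ε) →
      ∃ g : G → ℂ, MemWOrlicz μ Φ ω g ∧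
        Tendsto (fun n => wOrliczNorm μ Φ ω (F n - g)) atTop (𝓝 0)) ∧
    -- `Λ_ω` is an isometry of `L^Φ(G)` into `L^Φ_ω(G)` …
    (∀ f : G → ℂ, MemOrlicz μ Φ f →
      MemWOrlicz μ Φ ω (LamW ω f) ∧ wOrliczNorm μ Φ ω (LamW ω f) = orliczNorm μ Φ f) ∧
    -- … which is onto
    (∀ g : G → ℂ, MemWOrlicz μ Φ ω g → ∃ f : G → ℂ, MemOrlicz μ Φ f ∧ LamW ω f = g) ∧
    -- `Λ_ω` intertwines `⊛` and `⊛_T` for `f ∈ L¹(G)`, `g ∈ L^Φ(G)`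
    (∀ f g : G → ℂ, MemLp f 1 μ → MemOrlicz μ Φ g →
      LamW ω (twConv μ Ω f g) = twConv μ (circlePart Ω) (LamW ω f) (LamW ω g) ∧
      LamW ω (twConv μ Ω g f) = twConv μ (circlePart Ω) (LamW ω g) (LamW ω f)) ∧
    -- and, if `(L^Φ(G),⊛)` is a twisted Orlicz algebra, for all `f, g ∈ L^Φ(G)`,
    (IsTwistedOrliczAlgebra μ Φ Ω →
      (∀ f g : G → ℂ, MemOrlicz μ Φ f → MemOrlicz μ Φ g →
        LamW ω (twConv μ Ω f g) = twConv μ (circlePart Ω) (LamW ω f) (LamW ω g)) ∧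
      ∃ C : ℝ≥0∞, 0 < C ∧ C ≠ ⊤ ∧ ∀ f g : G → ℂ,
        MemWOrlicz μ Φ ω f → MemWOrlicz μ Φ ω g →
          MemWOrlicz μ Φ ω (twConv μ (circlePart Ω) f g) ∧
          wOrliczNorm μ Φ ω (twConv μ (circlePart Ω) f g) ≤
            C * wOrliczNorm μ Φ ω f * wOrliczNorm μ Φ ω g) := by
  have hω0 : ∀ s, ω s ≠ 0 := fun s => (hω.pos s).ne'
  have hΛ := LamW_twConv μ hω0 hΩω
  refine ⟨exists_tendsto_wOrliczNorm_of_cauchy hΦ hω0,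
    fun f hf => ⟨(memWOrlicz_LamW_iff hω0).2 hf, wOrliczNorm_LamW hω0 f⟩,
    fun g hg => ⟨_, hg, LamW_of_mul_weight hω0 g⟩,
    fun f g _ _ => ⟨hΛ f g, hΛ g f⟩,
    fun halg => ⟨fun f g _ _ => hΛ f g,
      halg.exists_wOrliczNorm_twConv_circlePart_le hω0 hΩω⟩⟩

/-- **Lemma 5.2.** For `Ω ∈ Z²_bw(G,ℂ*)` with associated weight `ω`, the weighted
Orlicz space `L^Φ_ω(G)` is a Banach space and `Λ_ω : L^Φ(G) → L^Φ_ω(G)`, `f ↦ f/ω`,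
is a surjective linear isometry intertwining the twisted convolutions `⊛` (from `Ω`)
and `⊛_T` (from `Ω_T`); when `(L^Φ(G),⊛)` is a twisted Orlicz algebra this holds for
all `f, g ∈ L^Φ(G)`, and `(L^Φ_ω(G), ⊛_T, ‖·‖_{Φ,ω})` is a Banach algebra. -/
theorem weighted_orlicz_transfer
    {G : Type*} [Group G] [TopologicalSpace G] [IsTopologicalGroup G]
    [LocallyCompactSpace G] [MeasurableSpace G] [BorelSpace G]
    (μ : Measure G) [μ.IsHaarMeasure]
    (Φ : ℝ → ℝ) (hΦ : IsYoung Φ)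
    (Ω : G × G → ℂ) (hΩ : IsBddCocycle μ Ω)
    (ω : G → ℝ) (hω : IsWeight μ ω) (hΩω : IsCoboundaryOf Ω ω) :
    -- `L^Φ_ω(G)` is a Banach space (sequential completeness in `‖·‖_{Φ,ω}`)
    (∀ F : ℕ → G → ℂ, (∀ n, MemWOrlicz μ Φ ω (F n)) →
      (∀ ε : ℝ≥0∞, 0 < ε → ∃ N : ℕ, ∀ m ≥ N, ∀ n ≥ N,
        wOrliczNorm μ Φ ω (F m - F n) < ε) →
      ∃ g : G → ℂ, MemWOrlicz μ Φ ω g ∧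
        Tendsto (fun n => wOrliczNorm μ Φ ω (F n - g)) atTop (𝓝 0)) ∧
    -- `Λ_ω` is an isometry of `L^Φ(G)` into `L^Φ_ω(G)` …
    (∀ f : G → ℂ, MemOrlicz μ Φ f →
      MemWOrlicz μ Φ ω (LamW ω f) ∧ wOrliczNorm μ Φ ω (LamW ω f) = orliczNorm μ Φ f) ∧
    -- … which is onto
    (∀ g : G → ℂ, MemWOrlicz μ Φ ω g → ∃ f : G → ℂ, MemOrlicz μ Φ f ∧ LamW ω f = g) ∧
    -- `Λ_ω` intertwines `⊛` and `⊛_T` for `f ∈ L¹(G)`, `g ∈ L^Φ(G)`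
    (∀ f g : G → ℂ, MemLp f 1 μ → MemOrlicz μ Φ g →
      LamW ω (twConv μ Ω f g) = twConv μ (circlePart Ω) (LamW ω f) (LamW ω g) ∧
      LamW ω (twConv μ Ω g f) = twConv μ (circlePart Ω) (LamW ω g) (LamW ω f)) ∧
    -- and, if `(L^Φ(G),⊛)` is a twisted Orlicz algebra, for all `f, g ∈ L^Φ(G)`,
    (IsTwistedOrliczAlgebra μ Φ Ω →
      (∀ f g : G → ℂ, MemOrlicz μ Φ f → MemOrlicz μ Φ g →
        LamW ω (twConv μ Ω f g) = twConv μ (circlePart Ω) (LamW ω f) (LamW ω g)) ∧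
      ∃ C : ℝ≥0∞, 0 < C ∧ C ≠ ⊤ ∧ ∀ f g : G → ℂ,
        MemWOrlicz μ Φ ω f → MemWOrlicz μ Φ ω g →
          MemWOrlicz μ Φ ω (twConv μ (circlePart Ω) f g) ∧
          wOrliczNorm μ Φ ω (twConv μ (circlePart Ω) f g) ≤
            C * wOrliczNorm μ Φ ω f * wOrliczNorm μ Φ ω g) :=
  weighted_orlicz_transfer_general μ Φ hΦ Ω ω hω hΩω
end
end

section
/- Let B be a Banach *-algebra having A as a *-subalgebra such that A is a differential subalgebra of B, where either A and B are simultaneously unital with the same unit, or both are non-unital. If B is symmetric, then A is symmetric. -/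
/-!
Pass to the `ℓ¹`-unitizations, where the differential estimate survives with constant `C + 1`.
There `‖x ^ (2n)‖ ≤ 2C ‖x ^ n‖ ‖φ x ^ n‖` and Gelfand's formula give
`ρ_A(x)² ≤ ρ_A(x) ρ_B(φ x)`, so `ρ_A(x) ≤ ρ_B(φ x)`. Applied to the translates `x - c`, this
says that every closed disc containing `σ_B(φ x)` contains `σ_A(x)`. For `x = a⋆a` the set
`σ_B(φ x)` is a bounded subset of `[0, ∞)`, and the discs containing such a set cut out a
subset of `[0, ∞)`.
-/

open Filter Topology

noncomputable section

open Metric WithLp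

theorem Complex.mem_closedBall_iff_sq {z c : ℂ} {r : ℝ} (hr : 0 ≤ r) :
    z ∈ closedBall c r ↔ (z.re - c.re) ^ 2 + (z.im - c.im) ^ 2 ≤ r ^ 2 := by
  rw [mem_closedBall, Complex.dist_eq_re_im, Real.sqrt_le_left hr]

theorem Complex.im_eq_zero_and_re_nonneg_of_forall_closedBall {S : Set ℂ}
    (hS : S ⊆ {z | z.im = 0 ∧ 0 ≤ z.re}) (hSb : Bornology.IsBounded S) {z : ℂ}
    (hz : ∀ c r, S ⊆ closedBall c r → z ∈ closedBall c r) : z.im = 0 ∧ 0 ≤ z.re := by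
  obtain ⟨R, hR, hSR⟩ := hSb.subset_closedBall_lt 0 0
  have hdisc : ∀ (c : ℂ) (r : ℝ), 0 ≤ r → (∀ t ∈ Set.Icc 0 R, (t - c.re) ^ 2 + c.im ^ 2 ≤ r ^ 2) →
      (z.re - c.re) ^ 2 + (z.im - c.im) ^ 2 ≤ r ^ 2 := by
    intro c r hr hc
    refine (Complex.mem_closedBall_iff_sq hr).mp (hz c r fun w hw => ?_)
    obtain ⟨him, hre⟩ := hS hw
    have hwR : w.re ≤ R := (Complex.re_le_norm w).trans (mem_closedBall_zero_iff.mp (hSR hw))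
    rw [Complex.mem_closedBall_iff_sq hr, him, zero_sub, neg_sq]
    exact hc _ ⟨hre, hwR⟩
  constructor
  · by_contra him
    -- a disc centred at `s * I` containing `[0, R]`; for this `s` it misses `z`
    set s := -(R ^ 2 + 1) / (2 * z.im)
    have hs : 2 * s * z.im = -(R ^ 2 + 1) := by simp only [s]; field_simp
    have := hdisc ⟨0, s⟩ √(R ^ 2 + s ^ 2) (Real.sqrt_nonneg _) fun t ht => by
      rw [Real.sq_sqrt (by positivity)]
      nlinarith [ht.1, ht.2]
    rw [Real.sq_sqrt (by positivity)] at this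
    nlinarith
  · have := hdisc R R hR.le fun t ht => by
      simp only [Complex.ofReal_re, Complex.ofReal_im]
      nlinarith [ht.1, ht.2]
    simp only [Complex.ofReal_re, Complex.ofReal_im, sub_zero] at this
    nlinarith

theorem spectrum.subset_closedBall_zero_iff {𝕜 A : Type*} [NormedField 𝕜] [Ring A] [Algebra 𝕜 A]
    {a : A} {r : ℝ} (hr : 0 ≤ r) :
    spectrum 𝕜 a ⊆ closedBall 0 r ↔ spectralRadius 𝕜 a ≤ ENNReal.ofReal r := by
  simp only [spectralRadius, iSup₂_le_iff, Set.subset_def, mem_closedBall_zero_iff,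
    ← ENNReal.ofReal_coe_nnreal, coe_nnnorm, ENNReal.ofReal_le_ofReal_iff hr]

theorem spectrum.subset_closedBall_iff {𝕜 A : Type*} [NormedField 𝕜] [Ring A] [Algebra 𝕜 A]
    {a : A} {c : 𝕜} {r : ℝ} (hr : 0 ≤ r) :
    spectrum 𝕜 a ⊆ closedBall c r ↔
      spectralRadius 𝕜 (algebraMap 𝕜 A (-c) + a) ≤ ENNReal.ofReal r := by
  rw [← spectrum.subset_closedBall_zero_iff hr, ← spectrum.vadd_eq, ← neg_add_cancel c,
    ← vadd_eq_add, ← vadd_closedBall, Set.vadd_set_subset_vadd_set_iff]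

theorem spectrum.spectralRadius_ne_top {𝕜 A : Type*} [NormedField 𝕜] [NormedRing A]
    [NormedAlgebra 𝕜 A] [CompleteSpace A] (a : A) : spectralRadius 𝕜 a ≠ ⊤ := by
  refine ne_top_of_le_ne_top ?_ (spectrum.spectralRadius_le_pow_nnnorm_pow_one_div 𝕜 a 0)
  simp [ENNReal.mul_ne_top]

theorem spectrum.tendsto_norm_pow_rpow_one_div_toReal_spectralRadius {A : Type*} [NormedRing A]
    [NormedAlgebra ℂ A] [CompleteSpace A] (a : A) :
    Tendsto (fun n : ℕ => ‖a ^ n‖ ^ (1 / n : ℝ)) atTop (𝓝 (spectralRadius ℂ a).toReal) := by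
  have := (ENNReal.tendsto_toReal (spectrum.spectralRadius_ne_top a)).comp
    (spectrum.pow_norm_pow_one_div_tendsto_nhds_spectralRadius a)
  refine this.congr fun n => ?_
  simp [ENNReal.toReal_ofReal (Real.rpow_nonneg (norm_nonneg _) _)]

def HasDifferentialBound {A B : Type*} [NonUnitalNormedRing A] [Norm B] (f : A → B) (C : ℝ) :
    Prop :=
  ∀ a b : A, ‖a * b‖ ≤ C * (‖a‖ * ‖f b‖ + ‖f a‖ * ‖b‖)

theorem spectralRadius_le_spectralRadius_of_hasDifferentialBound {A B : Type*} [NormedRing A]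
    [NormedAlgebra ℂ A] [CompleteSpace A] [NormedRing B] [NormedAlgebra ℂ B] [CompleteSpace B]
    (φ : A →ₐ[ℂ] B) {C : ℝ} (hC : 0 < C) (hφ : HasDifferentialBound φ C) (a : A) :
    spectralRadius ℂ a ≤ spectralRadius ℂ (φ a) := by
  set ρA := (spectralRadius ℂ a).toReal
  set ρB := (spectralRadius ℂ (φ a)).toReal
  have hA := spectrum.tendsto_norm_pow_rpow_one_div_toReal_spectralRadius a
  have hB := spectrum.tendsto_norm_pow_rpow_one_div_toReal_spectralRadius (φ a)
  have hpow : ∀ n : ℕ, ‖a ^ (2 * n)‖ ≤ 2 * C * (‖a ^ n‖ * ‖φ a ^ n‖) := fun n => by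
    have := hφ (a ^ n) (a ^ n)
    rwa [← pow_add, ← two_mul, map_pow, mul_comm ‖φ a ^ n‖, ← two_mul, ← mul_assoc,
      mul_comm C] at this
  have hroot : ∀ n : ℕ, (‖a ^ (2 * n)‖ ^ (1 / (2 * n : ℕ) : ℝ)) ^ 2 ≤
      (2 * C) ^ (1 / n : ℝ) * ‖a ^ n‖ ^ (1 / n : ℝ) * ‖φ a ^ n‖ ^ (1 / n : ℝ) := fun n => by
    rw [← Real.rpow_natCast, ← Real.rpow_mul (norm_nonneg _), ← Real.mul_rpow (by positivity)
      (norm_nonneg _), ← Real.mul_rpow (by positivity) (by positivity), mul_assoc]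
    refine le_of_eq_of_le ?_ (Real.rpow_le_rpow (norm_nonneg _) (hpow n) (by positivity))
    push_cast
    congr 1
    rcases eq_or_ne (n : ℝ) 0 with hn | hn
    · simp [hn]
    · field_simp
  have hlhs : Tendsto (fun n : ℕ => (‖a ^ (2 * n)‖ ^ (1 / (2 * n : ℕ) : ℝ)) ^ 2) atTop
      (𝓝 (ρA ^ 2)) :=
    (hA.comp (tendsto_id.const_mul_atTop' two_pos)).pow 2
  have hC1 : Tendsto (fun n : ℕ => (2 * C) ^ (1 / n : ℝ)) atTop (𝓝 1) := by
    simpa only [Real.rpow_zero, Function.comp_def] using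
      (Real.continuousAt_const_rpow (by positivity : 2 * C ≠ 0)).tendsto.comp
        (tendsto_one_div_atTop_nhds_zero_nat (𝕜 := ℝ))
  have hsq : ρA ^ 2 ≤ ρA * ρB := by
    simpa using le_of_tendsto_of_tendsto' hlhs ((hC1.mul hA).mul hB) hroot
  rw [← ENNReal.toReal_le_toReal (spectrum.spectralRadius_ne_top a)
    (spectrum.spectralRadius_ne_top (φ a))]
  rcases (ENNReal.toReal_nonneg : 0 ≤ ρA).eq_or_lt with h0 | hpos
  · exact h0 ▸ ENNReal.toReal_nonneg
  · nlinarith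

theorem spectrum_subset_closedBall_of_spectralRadius_le {A B : Type*} [NormedRing A]
    [NormedAlgebra ℂ A] [NormedRing B] [NormedAlgebra ℂ B] [CompleteSpace B] [Nontrivial B]
    (φ : A →ₐ[ℂ] B) (hφ : ∀ a, spectralRadius ℂ a ≤ spectralRadius ℂ (φ a)) {a : A} {c : ℂ}
    {r : ℝ} (h : spectrum ℂ (φ a) ⊆ closedBall c r) : spectrum ℂ a ⊆ closedBall c r := by
  have hr : 0 ≤ r := nonempty_closedBall.mp ((spectrum.nonempty (φ a)).mono h)
  rw [spectrum.subset_closedBall_iff hr] at h ⊢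
  exact (hφ _).trans (by rwa [map_add, AlgHom.commutes])

namespace WithLp

variable {A B : Type*} [NonUnitalNormedRing A] [NormedSpace ℂ A] [IsScalarTower ℂ A A]
  [SMulCommClass ℂ A A] [NonUnitalNormedRing B] [NormedSpace ℂ B] [IsScalarTower ℂ B B]
  [SMulCommClass ℂ B B]

def unitizationMap (ι : A →ₙₐ[ℂ] B) :
    WithLp 1 (Unitization ℂ A) →ₐ[ℂ] WithLp 1 (Unitization ℂ B) :=
  ((unitizationAlgEquiv (A := B) ℂ).symm.toAlgHom.comp
    ((Unitization.inrNonUnitalAlgHom ℂ B).comp ι).toAlgHom).comp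
      (unitizationAlgEquiv (A := A) ℂ).toAlgHom

variable (ι : A →ₙₐ[ℂ] B)

@[simp]
lemma fst_ofLp_unitizationMap (z : WithLp 1 (Unitization ℂ A)) :
    (ofLp (unitizationMap ι z)).fst = (ofLp z).fst := by
  simp [unitizationMap, Unitization.algebraMap_eq_inl]

@[simp]
lemma snd_ofLp_unitizationMap (z : WithLp 1 (Unitization ℂ A)) :
    (ofLp (unitizationMap ι z)).snd = ι (ofLp z).snd := by
  simp [unitizationMap, Unitization.algebraMap_eq_inl]

lemma norm_unitizationMap (z : WithLp 1 (Unitization ℂ A)) :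
    ‖unitizationMap ι z‖ = ‖(ofLp z).fst‖ + ‖ι (ofLp z).snd‖ := by
  rw [unitization_norm_def, fst_ofLp_unitizationMap, snd_ofLp_unitizationMap]

lemma unitizationMap_toLp_inr (a : A) :
    unitizationMap ι (toLp 1 (a : Unitization ℂ A)) = toLp 1 (ι a : Unitization ℂ B) := by
  apply (WithLp.equiv 1 (Unitization ℂ B)).injective
  ext <;> simp

lemma spectrum_toLp_inr (a : A) :
    spectrum ℂ (toLp 1 (a : Unitization ℂ A)) = quasispectrum ℂ a := by
  rw [Unitization.quasispectrum_eq_spectrum_inr ℂ a,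
    ← AlgEquiv.spectrum_eq (unitizationAlgEquiv (A := A) ℂ) (toLp 1 (a : Unitization ℂ A))]
  rfl

lemma hasDifferentialBound_unitizationMap {C : ℝ} (hC : 0 ≤ C) (h : HasDifferentialBound ι C) :
    HasDifferentialBound (unitizationMap ι) (C + 1) := by
  intro z w
  rw [norm_unitizationMap, norm_unitizationMap]
  simp only [unitization_norm_def, unitization_mul, Unitization.fst_mul,
    Unitization.snd_mul]
  set α := (ofLp z).fst
  set β := (ofLp w).fst
  set x := (ofLp z).snd
  set y := (ofLp w).snd
  have hscalar : ‖α * β‖ + ‖α • y + β • x‖ ≤ ‖α‖ * ‖β‖ + ‖α‖ * ‖y‖ + ‖β‖ * ‖x‖ := by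
    rw [norm_mul, add_assoc, ← norm_smul α y, ← norm_smul β x]
    gcongr
    exact norm_add_le _ _
  have hS : ‖α‖ * ‖β‖ + ‖α‖ * ‖y‖ + ‖β‖ * ‖x‖ ≤
      (‖α‖ + ‖x‖) * (‖β‖ + ‖ι y‖) + (‖α‖ + ‖ι x‖) * (‖β‖ + ‖y‖) := by
    nlinarith [norm_nonneg α, norm_nonneg β, norm_nonneg x, norm_nonneg y, norm_nonneg (ι x),
      norm_nonneg (ι y)]
  have hT : ‖x‖ * ‖ι y‖ + ‖ι x‖ * ‖y‖ ≤
      (‖α‖ + ‖x‖) * (‖β‖ + ‖ι y‖) + (‖α‖ + ‖ι x‖) * (‖β‖ + ‖y‖) := by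
    nlinarith [norm_nonneg α, norm_nonneg β, norm_nonneg x, norm_nonneg y, norm_nonneg (ι x),
      norm_nonneg (ι y)]
  calc ‖α * β‖ + ‖α • y + β • x + x * y‖
      ≤ ‖α * β‖ + (‖α • y + β • x‖ + ‖x * y‖) := add_le_add_right (norm_add_le _ _) _
    _ ≤ ‖α‖ * ‖β‖ + ‖α‖ * ‖y‖ + ‖β‖ * ‖x‖ + C * (‖x‖ * ‖ι y‖ + ‖ι x‖ * ‖y‖) := by
        linarith [h x y]
    _ ≤ _ := by linear_combination hS + mul_le_mul_of_nonneg_left hT hC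

end WithLp

theorem differential_star_subalgebra_symmetric_general
    {A B : Type*} [NonUnitalNormedRing A] [NonUnitalNormedRing B]
    [NormedSpace ℂ A] [IsScalarTower ℂ A A] [SMulCommClass ℂ A A]
    [NormedSpace ℂ B] [IsScalarTower ℂ B B] [SMulCommClass ℂ B B]
    [CompleteSpace A] [CompleteSpace B]
    [StarRing A] [StarRing B]
    (ι : A →ₙₐ[ℂ] B)
    (hstar : ∀ a : A, ι (star a) = star (ι a))
    -- the differential norm property
    (hdiff : ∃ C : ℝ, 0 < C ∧ ∀ a b : A, ‖a * b‖ ≤ C * (‖a‖ * ‖ι b‖ + ‖ι a‖ * ‖b‖))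
    -- `B` is symmetric: `σ_B(b* b) ⊆ [0,∞)` for every `b ∈ B`
    (hBsymm : ∀ b : B, quasispectrum ℂ (star b * b) ⊆ {z : ℂ | z.im = 0 ∧ 0 ≤ z.re}) :
    -- then `A` is symmetric
    ∀ a : A, quasispectrum ℂ (star a * a) ⊆ {z : ℂ | z.im = 0 ∧ 0 ≤ z.re} := by
  obtain ⟨C, hC, hdiff⟩ := hdiff
  have hρ := spectralRadius_le_spectralRadius_of_hasDifferentialBound (unitizationMap ι)
    (by linarith) (hasDifferentialBound_unitizationMap ι hC.le hdiff)
  intro a μ hμ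
  have hB : spectrum ℂ (unitizationMap ι (toLp 1 ((star a * a : A) : Unitization ℂ A))) =
      quasispectrum ℂ (star (ι a) * ι a) := by
    rw [unitizationMap_toLp_inr, spectrum_toLp_inr, map_mul, hstar]
  rw [← spectrum_toLp_inr] at hμ
  refine Complex.im_eq_zero_and_re_nonneg_of_forall_closedBall (hB ▸ hBsymm (ι a))
    (spectrum.isBounded _) fun c r hsub => ?_
  exact spectrum_subset_closedBall_of_spectralRadius_le _ hρ hsub hμ

/-- **Lemma 5.3 (iii).** Let `B` be a Banach `*`-algebra having `A` as a `*`-subalgebra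
which is a differential subalgebra of `B` (both taken in the non-unital framework,
spectra being quasi-spectra, which covers the unital-with-common-unit case as well).
If `B` is symmetric then so is `A`. -/
theorem differential_star_subalgebra_symmetric
    {A B : Type*} [NonUnitalNormedRing A] [NonUnitalNormedRing B]
    [NormedSpace ℂ A] [IsScalarTower ℂ A A] [SMulCommClass ℂ A A]
    [NormedSpace ℂ B] [IsScalarTower ℂ B B] [SMulCommClass ℂ B B]
    [CompleteSpace A] [CompleteSpace B]
    [StarRing A] [StarRing B]
    (ι : A →ₙₐ[ℂ] B) (hinj : Function.Injective ι)
    (hstar : ∀ a : A, ι (star a) = star (ι a))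
    (hcont : ∃ K : ℝ, 0 < K ∧ ∀ a : A, ‖ι a‖ ≤ K * ‖a‖)
    -- the differential norm property
    (hdiff : ∃ C : ℝ, 0 < C ∧ ∀ a b : A, ‖a * b‖ ≤ C * (‖a‖ * ‖ι b‖ + ‖ι a‖ * ‖b‖))
    -- `B` is symmetric: `σ_B(b* b) ⊆ [0,∞)` for every `b ∈ B`
    (hBsymm : ∀ b : B, quasispectrum ℂ (star b * b) ⊆ {z : ℂ | z.im = 0 ∧ 0 ≤ z.re}) :
    -- then `A` is symmetric
    ∀ a : A, quasispectrum ℂ (star a * a) ⊆ {z : ℂ | z.im = 0 ∧ 0 ≤ z.re} :=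
  differential_star_subalgebra_symmetric_general ι hstar hdiff hBsymm

end
end

section
/- Let G be a compactly generated locally compact group of polynomial growth with compact symmetric generating neighborhood U satisfying the strict growth estimate C₁nᵈ ≤ λ(Uⁿ) ≤ C₂nᵈ for all n ∈ ℕ, and let τ be the associated length function. Let Ψ be a Young function and l ≥ 1 such that lim_{x→0⁺} Ψ(x)/x^l exists. If β > d/l, then 1/ω_β ∈ L^Ψ(G); in particular there exists N > 0 such that ∫_G Ψ(N/(1+τ(s))^β) ds < ∞. -/
/-!
Near `0` the Young function is dominated by a multiple of `x ^ l`, so `Ψ(δ / (1 + τ) ^ β)` is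
bounded by a multiple of `(1 + τ) ^ (-β l)` with `β l > d`. Grouping the elements of `G` by
dyadic blocks `2 ^ k ≤ 1 + τ(s) < 2 ^ (k + 1)` of word length, the block `k` lies in
`U ^ 2 ^ (k + 1)`, whose measure is `O(2 ^ (k d))`; hence the integral is dominated by the
geometric series `∑ₖ 2 ^ (k (d - β l))`.
-/

open MeasureTheory Filter ENNReal NNReal Pointwise Topology

noncomputable section

open MeasureTheory Filter ENNReal NNReal Topology Pointwise

/-- An extended-real-valued Young function: nonzero, convex, `Ψ(0) = 0`,
`Ψ(x) → ∞` as `x → ∞`. -/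
def IsYoungE (Ψ : ℝ → ℝ≥0∞) : Prop :=
  Ψ 0 = 0 ∧ (∃ x : ℝ, 0 ≤ x ∧ Ψ x ≠ 0) ∧ Tendsto Ψ atTop (𝓝 ⊤) ∧
    ∀ x ∈ Set.Ici (0 : ℝ), ∀ y ∈ Set.Ici (0 : ℝ), ∀ a b : ℝ, 0 ≤ a → 0 ≤ b →
      a + b = 1 → Ψ (a * x + b * y) ≤ ENNReal.ofReal a * Ψ x + ENNReal.ofReal b * Ψ y

theorem eventually_le_mul_of_tendsto_div {α : Type*} {f g : α → ℝ≥0∞} {l : Filter α}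
    {L : ℝ≥0∞} (hL : L ≠ ⊤) (hg : ∀ᶠ x in l, g x ≠ 0)
    (h : Tendsto (fun x => f x / g x) l (𝓝 L)) :
    ∀ᶠ x in l, f x ≤ (L + 1) * g x := by
  filter_upwards [hg, h.eventually_lt_const (ENNReal.lt_add_right hL one_ne_zero)] with x hg0 hx
  rcases eq_or_ne (g x) ⊤ with hgt | hgt
  · simp [hgt]
  · exact ((ENNReal.div_lt_iff (Or.inl hg0) (Or.inl hgt)).1 hx).le

theorem le_mul_one_add_rpow_neg_of_le_mul_rpow {Ψ : ℝ → ℝ≥0∞} {M : ℝ≥0∞} {δ l β t : ℝ}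
    (hΨ : ∀ x ∈ Set.Ioc 0 δ, Ψ x ≤ M * ENNReal.ofReal (x ^ l)) (hδ : 0 < δ) (hβ : 0 ≤ β)
    (ht : 0 ≤ t) :
    Ψ (δ * ((1 + t) ^ β)⁻¹) ≤ M * ENNReal.ofReal (δ ^ l) * ENNReal.ofReal ((1 + t) ^ (-(β * l))) := by
  have ht1 : 0 < 1 + t := by linarith
  have hx : δ * ((1 + t) ^ β)⁻¹ ∈ Set.Ioc 0 δ :=
    ⟨by positivity, mul_le_of_le_one_right hδ.le
      (inv_le_one_of_one_le₀ (Real.one_le_rpow (by linarith) hβ))⟩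
  have hpow : (δ * ((1 + t) ^ β)⁻¹) ^ l = δ ^ l * (1 + t) ^ (-(β * l)) := by
    rw [Real.mul_rpow hδ.le (by positivity), Real.inv_rpow (by positivity),
      ← Real.rpow_mul ht1.le, Real.rpow_neg ht1.le]
  calc Ψ (δ * ((1 + t) ^ β)⁻¹) ≤ M * ENNReal.ofReal ((δ * ((1 + t) ^ β)⁻¹) ^ l) := hΨ _ hx
    _ = _ := by rw [hpow, ENNReal.ofReal_mul (by positivity), mul_assoc]

section WordLength

variable {G : Type*} [Monoid G] {U : Set G}

def wordLength (U : Set G) (s : G) : ℕ := sInf {n : ℕ | s ∈ U ^ n}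

theorem lengthFn_eq_wordLength {H : Type*} [Group H] (V : Set H) (s : H) :
    lengthFn V s = wordLength V s := rfl

theorem mem_pow_wordLength (hgen : ∀ s, ∃ n, s ∈ U ^ n) (s : G) : s ∈ U ^ wordLength U s :=
  Nat.sInf_mem (hgen s)

variable [MeasurableSpace G] {μ : Measure G}

theorem lintegral_comp_wordLength_le_tsum {F : ℕ → ℝ≥0∞} (hF : Antitone F)
    (h1 : (1 : G) ∈ U) (hgen : ∀ s, ∃ n, s ∈ U ^ n) :
    ∫⁻ s, F (wordLength U s) ∂μ ≤ ∑' k : ℕ, F (2 ^ k - 1) * μ (U ^ 2 ^ (k + 1)) := by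
  -- the powers of `U` need not be measurable, hence `toMeasurable`
  have hpt : ∀ s, F (wordLength U s) ≤
      ∑' k : ℕ, (toMeasurable μ (U ^ 2 ^ (k + 1))).indicator (fun _ => F (2 ^ k - 1)) s := by
    intro s
    obtain ⟨k, hlow, hup⟩ :
        ∃ k, 2 ^ k - 1 ≤ wordLength U s ∧ wordLength U s ≤ 2 ^ (k + 1) := by
      have hlog := Nat.pow_log_le_self 2 (Nat.add_one_ne_zero (wordLength U s))
      have hlog' := Nat.lt_pow_succ_log_self one_lt_two (wordLength U s + 1)
      exact ⟨Nat.log 2 (wordLength U s + 1), by omega, by omega⟩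
    have hs : s ∈ toMeasurable μ (U ^ 2 ^ (k + 1)) :=
      subset_toMeasurable μ _ (Set.pow_subset_pow_right h1 hup (mem_pow_wordLength hgen s))
    calc F (wordLength U s) ≤ F (2 ^ k - 1) := hF hlow
      _ = (toMeasurable μ (U ^ 2 ^ (k + 1))).indicator (fun _ => F (2 ^ k - 1)) s :=
        (Set.indicator_of_mem hs (fun _ => F (2 ^ k - 1))).symm
      _ ≤ _ := ENNReal.le_tsum k
  calc ∫⁻ s, F (wordLength U s) ∂μ
      ≤ ∫⁻ s, ∑' k : ℕ,
          (toMeasurable μ (U ^ 2 ^ (k + 1))).indicator (fun _ => F (2 ^ k - 1)) s ∂μ :=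
        lintegral_mono hpt
    _ = ∑' k : ℕ, F (2 ^ k - 1) * μ (U ^ 2 ^ (k + 1)) := by
        rw [lintegral_tsum fun k =>
          (measurable_const.indicator (measurableSet_toMeasurable μ _)).aemeasurable]
        simp only [lintegral_indicator_const (measurableSet_toMeasurable μ _),
          measure_toMeasurable]

theorem measure_pow_two_pow_le {C : ℝ} {d : ℕ}
    (hgrowth : ∀ n : ℕ, μ (U ^ (n + 1)) ≤ ENNReal.ofReal (C * (n + 1 : ℕ) ^ d)) (k : ℕ) :
    μ (U ^ 2 ^ (k + 1)) ≤ ENNReal.ofReal (C * 2 ^ d * ((2 : ℝ) ^ d) ^ k) := by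
  have h := hgrowth (2 ^ (k + 1) - 1)
  rw [Nat.sub_add_cancel Nat.one_le_two_pow] at h
  convert h using 2
  push_cast
  ring

theorem lintegral_one_add_wordLength_rpow_neg_lt_top {C : ℝ} {d : ℕ} {p : ℝ}
    (h1 : (1 : G) ∈ U) (hgen : ∀ s, ∃ n, s ∈ U ^ n)
    (hgrowth : ∀ n : ℕ, μ (U ^ (n + 1)) ≤ ENNReal.ofReal (C * (n + 1 : ℕ) ^ d))
    (hp : (d : ℝ) < p) :
    ∫⁻ s, ENNReal.ofReal ((1 + (wordLength U s : ℝ)) ^ (-p)) ∂μ < ⊤ := by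
  have hp0 : 0 < p := (Nat.cast_nonneg d).trans_lt hp
  have hr1 : (2 : ℝ) ^ (-p) * 2 ^ d < 1 := by
    rw [← Real.rpow_natCast, ← Real.rpow_add two_pos]
    exact Real.rpow_lt_one_of_one_lt_of_neg one_lt_two (by linarith)
  set r : ℝ := (2 : ℝ) ^ (-p) * 2 ^ d
  have hr0 : 0 ≤ r := by positivity
  have hF : Antitone fun n : ℕ => ENNReal.ofReal ((1 + (n : ℝ)) ^ (-p)) := fun m n hmn =>
    ENNReal.ofReal_le_ofReal <| Real.rpow_le_rpow_of_nonpos (by positivity)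
      (by gcongr) (by linarith)
  have hterm : ∀ k : ℕ, ENNReal.ofReal ((1 + ((2 ^ k - 1 : ℕ) : ℝ)) ^ (-p)) *
      μ (U ^ 2 ^ (k + 1)) ≤ ENNReal.ofReal (C * 2 ^ d * r ^ k) := by
    intro k
    have hbase : 1 + ((2 ^ k - 1 : ℕ) : ℝ) = (2 : ℝ) ^ k := by
      rw [Nat.cast_sub Nat.one_le_two_pow]
      push_cast
      ring
    calc _ ≤ ENNReal.ofReal (((2 : ℝ) ^ (-p)) ^ k) *
          ENNReal.ofReal (C * 2 ^ d * ((2 : ℝ) ^ d) ^ k) := by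
          rw [hbase, ← Real.rpow_pow_comm zero_le_two]
          gcongr
          exact measure_pow_two_pow_le hgrowth k
      _ = ENNReal.ofReal (C * 2 ^ d * r ^ k) := by
          rw [← ENNReal.ofReal_mul (by positivity), mul_pow]
          ring_nf
  calc ∫⁻ s, ENNReal.ofReal ((1 + (wordLength U s : ℝ)) ^ (-p)) ∂μ
      ≤ ∑' k : ℕ, ENNReal.ofReal (C * 2 ^ d * r ^ k) :=
        (lintegral_comp_wordLength_le_tsum hF h1 hgen).trans (ENNReal.tsum_le_tsum hterm)
    _ ≤ ∑' k : ℕ, ENNReal.ofReal (max C 0 * 2 ^ d * r ^ k) :=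
        ENNReal.tsum_le_tsum fun k => ENNReal.ofReal_le_ofReal (by gcongr; exact le_max_left _ _)
    _ < ⊤ := by
        rw [← ENNReal.ofReal_tsum_of_nonneg (fun k => by positivity)
          ((summable_geometric_of_lt_one hr0 hr1).mul_left _)]
        exact ofReal_lt_top

end WordLength

theorem inv_polynomial_weight_mem_orlicz_general
    {G : Type*} [Group G] [TopologicalSpace G] [MeasurableSpace G]
    (μ : Measure G)
    -- `U` is a compact symmetric generating neighbourhood with strict growth of order `d`
    (U : Set G) (hUn : U ∈ 𝓝 (1 : G))
    (hUgen : (⋃ n : ℕ, U ^ (n + 1)) = Set.univ)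
    (d : ℕ) (C₁ C₂ : ℝ)
    (hgrowth : ∀ n : ℕ, ENNReal.ofReal (C₁ * (n + 1 : ℕ) ^ d) ≤ μ (U ^ (n + 1)) ∧
      μ (U ^ (n + 1)) ≤ ENNReal.ofReal (C₂ * (n + 1 : ℕ) ^ d))
    -- `Ψ` is a Young function and `l ≥ 1` with `lim_{x→0⁺} Ψ(x)/x^l` existing (finite)
    (Ψ : ℝ → ℝ≥0∞)
    (l : ℝ) (hl : 1 ≤ l)
    (hlim : ∃ L : ℝ≥0∞, L ≠ ⊤ ∧
      Tendsto (fun x : ℝ => Ψ x / ENNReal.ofReal (x ^ l)) (𝓝[>] (0 : ℝ)) (𝓝 L))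
    (β : ℝ) (hβ : β > (d : ℝ) / l) :
    -- `1/ω_β ∈ L^Ψ(G)` …
    (∃ α : ℝ, 0 < α ∧
      ∫⁻ s, Ψ (α * ((1 + lengthFn U s) ^ β)⁻¹) ∂μ < ⊤) ∧
    -- … in particular `∫ Ψ(N/(1+τ)^β) < ∞` for some `N > 0`
    ∃ N : ℝ, 0 < N ∧ ∫⁻ s, Ψ (N / (1 + lengthFn U s) ^ β) ∂μ < ⊤ := by
  have hl0 : 0 < l := one_pos.trans_le hl
  have hβ0 : 0 ≤ β := (div_nonneg (Nat.cast_nonneg d) hl0.le).trans hβ.le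
  have hgen : ∀ s, ∃ n, s ∈ U ^ n := fun s => by
    obtain ⟨n, hn⟩ := Set.mem_iUnion.1 (hUgen ▸ Set.mem_univ s)
    exact ⟨n + 1, hn⟩
  obtain ⟨L, hL, hlim⟩ := hlim
  obtain ⟨δ, hδ, hΨδ⟩ :=
    mem_nhdsGT_iff_exists_Ioc_subset.1 (eventually_le_mul_of_tendsto_div hL
      (eventually_nhdsWithin_of_forall fun x (hx : 0 < x) => by positivity) hlim)
  have hδ0 : (0 : ℝ) < δ := hδ
  have hpt : ∀ s, Ψ (δ * ((1 + lengthFn U s) ^ β)⁻¹) ≤ (L + 1) * ENNReal.ofReal (δ ^ l) *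
      ENNReal.ofReal ((1 + (wordLength U s : ℝ)) ^ (-(β * l))) := fun s =>
    le_mul_one_add_rpow_neg_of_le_mul_rpow (fun x hx => hΨδ hx) hδ0 hβ0 (Nat.cast_nonneg _)
  have hint : ∫⁻ s, Ψ (δ * ((1 + lengthFn U s) ^ β)⁻¹) ∂μ < ⊤ := by
    refine (lintegral_mono hpt).trans_lt ?_
    rw [lintegral_const_mul' _ _ (mul_ne_top (add_ne_top.2 ⟨hL, one_ne_top⟩) ofReal_ne_top)]
    exact mul_lt_top (mul_lt_top (add_lt_top.2 ⟨hL.lt_top, one_lt_top⟩) ofReal_lt_top)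
      (lintegral_one_add_wordLength_rpow_neg_lt_top (mem_of_mem_nhds hUn) hgen
        (fun n => (hgrowth n).2) ((div_lt_iff₀ hl0).1 hβ))
  exact ⟨⟨δ, hδ0, hint⟩, δ, hδ0, by simpa only [div_eq_mul_inv] using hint⟩

/-- The integral estimate in the proof of Corollary 6.3: on a compactly generated
group of strict polynomial growth `C₁ nᵈ ≤ λ(Uⁿ) ≤ C₂ nᵈ`, if `l ≥ 1` is such that
`lim_{x→0⁺} Ψ(x)/x^l` exists and `β > d/l`, then `1/ω_β ∈ L^Ψ(G)`; in particular
`∫_G Ψ(N/(1+τ(s))^β) ds < ∞` for some `N > 0`. -/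
theorem inv_polynomial_weight_mem_orlicz
    {G : Type*} [Group G] [TopologicalSpace G] [IsTopologicalGroup G]
    [LocallyCompactSpace G] [MeasurableSpace G] [BorelSpace G]
    (μ : Measure G) [μ.IsHaarMeasure]
    -- `U` is a compact symmetric generating neighbourhood with strict growth of order `d`
    (U : Set G) (hUc : IsCompact U) (hUn : U ∈ 𝓝 (1 : G)) (hUs : U⁻¹ = U)
    (hUgen : (⋃ n : ℕ, U ^ (n + 1)) = Set.univ)
    (d : ℕ) (C₁ C₂ : ℝ) (hC₁ : 0 < C₁) (hC₂ : 0 < C₂)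
    (hgrowth : ∀ n : ℕ, ENNReal.ofReal (C₁ * (n + 1 : ℕ) ^ d) ≤ μ (U ^ (n + 1)) ∧
      μ (U ^ (n + 1)) ≤ ENNReal.ofReal (C₂ * (n + 1 : ℕ) ^ d))
    -- `Ψ` is a Young function and `l ≥ 1` with `lim_{x→0⁺} Ψ(x)/x^l` existing (finite)
    (Ψ : ℝ → ℝ≥0∞) (hΨ : IsYoungE Ψ)
    (l : ℝ) (hl : 1 ≤ l)
    (hlim : ∃ L : ℝ≥0∞, L ≠ ⊤ ∧
      Tendsto (fun x : ℝ => Ψ x / ENNReal.ofReal (x ^ l)) (𝓝[>] (0 : ℝ)) (𝓝 L))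
    (β : ℝ) (hβ : β > (d : ℝ) / l) :
    -- `1/ω_β ∈ L^Ψ(G)` …
    (∃ α : ℝ, 0 < α ∧
      ∫⁻ s, Ψ (α * ((1 + lengthFn U s) ^ β)⁻¹) ∂μ < ⊤) ∧
    -- … in particular `∫ Ψ(N/(1+τ)^β) < ∞` for some `N > 0`
    ∃ N : ℝ, 0 < N ∧ ∫⁻ s, Ψ (N / (1 + lengthFn U s) ^ β) ∂μ < ⊤ :=
  inv_polynomial_weight_mem_orlicz_general μ U hUn hUgen d C₁ C₂ hgrowth Ψ l hl hlim β hβ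

end
end

section
/- Let β, γ > 0 and C > 0, and define p : [0,∞) → ℝ by p(x) = Cx/(ln(e+x))^β − γ ln(1+x). Then there exist x₀ > 0 and M > 0 such that: (i) p is positive and increasing on [x₀,∞); (ii) p′ is positive and decreasing on [x₀,∞); and (iii) for all x ≥ x₀ and y ≥ 0, 0 < p(x+y) ≤ p(x) + p(y) + M. -/
/-!
Write `p = C q - γ log (1 + ·)` with `q x = x / L x ^ β` and `L x = ln (e + x)`. Once
`L x ≥ 2 (β + 1)` one has `q' ≥ 1 / (2 L ^ β)` and
`q'' ≤ -β x / (2 (e + x)² L ^ (β + 1))`, and since every power of `L` is `o(x)`, eventually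
`C q'` dominates `γ / (1 + x)` and `C q''` dominates `γ / (1 + x)²`. So on some `[x₀, ∞)` the
function `p` is positive, increasing and concave. Concavity makes the increments
`p (x + y) - p x` decrease in `x`, hence they are at most `p (x₀ + y) - p x₀`; this is at most
`p y + p (2 x₀)` by concavity when `y ≥ x₀`, and at most `p y + p (2 x₀) + γ ln (1 + x₀)` by
monotonicity when `y < x₀`.
-/

open Filter Topology Real

noncomputable section

theorem ConcaveOn.map_add_map_le_of_add_eq {s : Set ℝ} {f : ℝ → ℝ} (hf : ConcaveOn ℝ s f)
    {a b c d : ℝ} (ha : a ∈ s) (hd : d ∈ s) (hab : a ≤ b) (hbd : b ≤ d)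
    (habcd : a + d = b + c) : f a + f d ≤ f b + f c := by
  rcases (hab.trans hbd).eq_or_lt with rfl | had
  · obtain rfl : b = a := le_antisymm hbd hab
    obtain rfl : c = b := by linarith
    rfl
  -- `b` and `c` are the convex combinations of `a` and `d` with swapped weights.
  set t := (d - b) / (d - a)
  have ht₀ : 0 ≤ t := div_nonneg (by linarith) (by linarith)
  have ht₁ : 0 ≤ 1 - t := by
    rw [sub_nonneg]; exact div_le_one_of_le₀ (by linarith) (by linarith)
  have hb : t * a + (1 - t) * d = b := by
    simp only [t]; field_simp; ring
  have hc : (1 - t) * a + t * d = c := by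
    simp only [t]; field_simp; rw [show c = a + d - b by linarith]; ring
  have h₁ := hf.2 ha hd ht₀ ht₁ (by ring)
  have h₂ := hf.2 ha hd ht₁ ht₀ (by ring)
  simp only [smul_eq_mul, hb, hc] at h₁ h₂
  linarith

theorem ConcaveOn.map_add_le_add_add_of_monotoneOn {f : ℝ → ℝ} {a m : ℝ}
    (hconc : ConcaveOn ℝ (Set.Ici a) f) (hmono : MonotoneOn f (Set.Ici a)) (ha : 0 ≤ a)
    (hfa : 0 ≤ f a) (hm : 0 ≤ m) (hlow : ∀ y ∈ Set.Ico 0 a, -m ≤ f y)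
    {x y : ℝ} (hx : a ≤ x) (hy : 0 ≤ y) : f (x + y) ≤ f x + f y + (f (2 * a) + m) := by
  have hshift : f a + f (x + y) ≤ f x + f (a + y) :=
    hconc.map_add_map_le_of_add_eq Set.self_mem_Ici (by simp only [Set.mem_Ici]; linarith) hx
      (by linarith) (by ring)
  rcases le_or_gt a y with hay | hya
  · have : f a + f (a + y) ≤ f y + f (2 * a) :=
      hconc.map_add_map_le_of_add_eq Set.self_mem_Ici (by simp only [Set.mem_Ici]; linarith) hay
        (by linarith) (by ring)
    linarith
  · have : f (a + y) ≤ f (2 * a) :=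
      hmono (by simp only [Set.mem_Ici]; linarith) (by simp only [Set.mem_Ici]; linarith)
        (by linarith)
    linarith [hlow y ⟨hy, hya⟩]

section Ici

variable {f f' f'' : ℝ → ℝ} {a : ℝ}

theorem monotoneOn_Ici_of_hasDerivAt_nonneg (hf : ∀ x ∈ Set.Ici a, HasDerivAt f (f' x) x)
    (hf' : ∀ x ∈ Set.Ici a, 0 ≤ f' x) : MonotoneOn f (Set.Ici a) :=
  monotoneOn_of_hasDerivWithinAt_nonneg (convex_Ici a)
    (fun x hx ↦ (hf x hx).continuousAt.continuousWithinAt)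
    (fun x hx ↦ (hf x (interior_subset hx)).hasDerivWithinAt)
    (fun x hx ↦ hf' x (interior_subset hx))

theorem antitoneOn_Ici_of_hasDerivAt_nonpos (hf : ∀ x ∈ Set.Ici a, HasDerivAt f (f' x) x)
    (hf' : ∀ x ∈ Set.Ici a, f' x ≤ 0) : AntitoneOn f (Set.Ici a) :=
  antitoneOn_of_hasDerivWithinAt_nonpos (convex_Ici a)
    (fun x hx ↦ (hf x hx).continuousAt.continuousWithinAt)
    (fun x hx ↦ (hf x (interior_subset hx)).hasDerivWithinAt)
    (fun x hx ↦ hf' x (interior_subset hx))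

theorem concaveOn_Ici_of_hasDerivAt2_nonpos (hf : ∀ x ∈ Set.Ici a, HasDerivAt f (f' x) x)
    (hf' : ∀ x ∈ Set.Ici a, HasDerivAt f' (f'' x) x) (hf'' : ∀ x ∈ Set.Ici a, f'' x ≤ 0) :
    ConcaveOn ℝ (Set.Ici a) f :=
  concaveOn_of_hasDerivWithinAt2_nonpos (convex_Ici a)
    (fun x hx ↦ (hf x hx).continuousAt.continuousWithinAt)
    (fun x hx ↦ (hf x (interior_subset hx)).hasDerivWithinAt)
    (fun x hx ↦ (hf' x (interior_subset hx)).hasDerivWithinAt)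
    (fun x hx ↦ hf'' x (interior_subset hx))

end Ici

namespace SubexpWeight

variable {x : ℝ}

def L (x : ℝ) : ℝ := log (exp 1 + x)

theorem one_le_L (hx : 0 ≤ x) : 1 ≤ L x := by
  have := log_le_log (exp_pos 1) (by linarith : exp 1 ≤ exp 1 + x)
  rwa [log_exp] at this

theorem L_pos (hx : 0 ≤ x) : 0 < L x := one_pos.trans_le (one_le_L hx)

theorem log_one_add_lt_L (hx : 0 ≤ x) : log (1 + x) < L x :=
  log_lt_log (by linarith) (by linarith [add_one_lt_exp one_ne_zero])

theorem tendsto_L_atTop : Tendsto L atTop atTop :=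
  tendsto_log_atTop.comp (tendsto_atTop_add_const_left atTop (exp 1) tendsto_id)

theorem hasDerivAt_L (hx : 0 ≤ x) : HasDerivAt L (exp 1 + x)⁻¹ x := by
  show HasDerivAt (fun y ↦ log (exp 1 + y)) _ x
  simpa [one_div] using ((hasDerivAt_id x).const_add (exp 1)).log (by positivity)

theorem isLittleO_L_rpow (r : ℝ) : (fun x ↦ L x ^ r) =o[atTop] id := by
  have hlin : (fun x : ℝ ↦ (exp 1 + x) ^ (1 : ℝ)) =O[atTop] id := by
    simpa only [rpow_one, id] using ((Asymptotics.isLittleO_const_id_atTop (exp 1)).isBigO.add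
      (Asymptotics.isBigO_refl id atTop))
  exact ((isLittleO_log_rpow_rpow_atTop r one_pos).comp_tendsto
    (tendsto_atTop_add_const_left atTop (exp 1) tendsto_id)).trans_isBigO hlin

theorem eventually_mul_L_rpow_le (r a : ℝ) {b : ℝ} (hb : 0 < b) :
    ∀ᶠ x in atTop, a * L x ^ r ≤ b * x := by
  filter_upwards [(isLittleO_L_rpow r).def (by positivity : 0 < b / (|a| + 1)),
    eventually_ge_atTop 0] with x hx hx₀
  rw [norm_eq_abs, norm_eq_abs, id, abs_of_nonneg hx₀] at hx
  calc a * L x ^ r ≤ |a| * |L x ^ r| := by rw [← abs_mul]; exact le_abs_self _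
    _ ≤ |a| * (b / (|a| + 1) * x) := by gcongr
    _ ≤ b * x := by
      rw [← mul_assoc, mul_div_assoc']
      gcongr
      rw [div_le_iff₀ (by positivity)]
      nlinarith [abs_nonneg a]

def q (β x : ℝ) : ℝ := x / L x ^ β

def q' (β x : ℝ) : ℝ := ((exp 1 + x) * L x - β * x) / ((exp 1 + x) * L x * L x ^ β)

def q'' (β x : ℝ) : ℝ :=
  -(β * ((2 * exp 1 + x) * L x - (β + 1) * x)) / ((exp 1 + x) ^ 2 * L x ^ 2 * L x ^ β)

theorem hasDerivAt_L_rpow (β : ℝ) (hx : 0 ≤ x) :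
    HasDerivAt (fun y ↦ L y ^ β) (β * L x ^ β / ((exp 1 + x) * L x)) x := by
  have hL := L_pos hx
  refine ((hasDerivAt_L hx).rpow_const (Or.inl hL.ne')).congr_deriv ?_
  rw [rpow_sub_one hL.ne']
  field_simp

theorem hasDerivAt_q (β : ℝ) (hx : 0 ≤ x) : HasDerivAt (q β) (q' β x) x := by
  have hL := L_pos hx
  refine ((hasDerivAt_id x).div (hasDerivAt_L_rpow β hx)
    (rpow_pos_of_pos hL β).ne').congr_deriv ?_
  rw [q', id]
  field_simp

theorem hasDerivAt_q' (β : ℝ) (hx : 0 ≤ x) : HasDerivAt (q' β) (q'' β x) x := by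
  have hL := L_pos hx
  have hE' : HasDerivAt (fun y ↦ exp 1 + y) 1 x := (hasDerivAt_id x).const_add (exp 1)
  refine (((hE'.mul (hasDerivAt_L hx)).sub ((hasDerivAt_id x).const_mul β)).div
    ((hE'.mul (hasDerivAt_L hx)).mul (hasDerivAt_L_rpow β hx))
    (by have := rpow_pos_of_pos hL β; simp only [Pi.mul_apply]; positivity)).congr_deriv ?_
  simp only [q'', Pi.mul_apply, Pi.sub_apply, id]
  field_simp
  ring

theorem one_div_two_mul_L_rpow_le_q' {β : ℝ} (hx : 0 ≤ x) (hL : 2 * β ≤ L x) :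
    1 / (2 * L x ^ β) ≤ q' β x := by
  have hL₀ := L_pos hx
  have hLβ := rpow_pos_of_pos hL₀ β
  have hE : x ≤ exp 1 + x := by linarith [exp_pos 1]
  rw [q', div_le_div_iff₀ (by positivity) (by positivity)]
  nlinarith [mul_le_mul hL hE hx hL₀.le]

theorem q''_le {β : ℝ} (hβ : 0 ≤ β) (hx : 0 ≤ x) (hL : 2 * (β + 1) ≤ L x) :
    q'' β x ≤ -(β * x / (2 * (exp 1 + x) ^ 2 * L x * L x ^ β)) := by
  have hL₀ := L_pos hx
  have hLβ := rpow_pos_of_pos hL₀ β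
  have hN : x * L x / 2 ≤ (2 * exp 1 + x) * L x - (β + 1) * x := by
    nlinarith [mul_le_mul_of_nonneg_right hL hx, exp_pos 1]
  rw [q'', neg_div, neg_le_neg_iff, div_le_div_iff₀ (by positivity) (by positivity)]
  nlinarith [mul_le_mul_of_nonneg_left hN
    (by positivity : 0 ≤ β * (2 * (exp 1 + x) ^ 2 * L x * L x ^ β))]

def p (β γ C x : ℝ) : ℝ := C * x / L x ^ β - γ * log (1 + x)

def p' (β γ C x : ℝ) : ℝ := C * q' β x - γ / (1 + x)

def p'' (β γ C x : ℝ) : ℝ := C * q'' β x + γ / (1 + x) ^ 2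

variable {β γ C : ℝ}

theorem hasDerivAt_p (hx : 0 ≤ x) : HasDerivAt (p β γ C) (p' β γ C x) x := by
  have hp : p β γ C = fun y ↦ C * q β y - γ * log (1 + y) := by
    funext y; rw [p, q, mul_div_assoc]
  rw [hp]
  refine (((hasDerivAt_q β hx).const_mul C).sub
    ((((hasDerivAt_id x).const_add 1).log (by positivity)).const_mul γ)).congr_deriv ?_
  rw [p', id, div_eq_mul_one_div γ]

theorem hasDerivAt_p' (hx : 0 ≤ x) : HasDerivAt (p' β γ C) (p'' β γ C x) x := by
  refine (((hasDerivAt_q' β hx).const_mul C).sub ((hasDerivAt_const x γ).div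
    ((hasDerivAt_id x).const_add 1) (by positivity))).congr_deriv ?_
  rw [p'', id]
  ring

theorem p_pos (hγ : 0 < γ) (hx : 0 ≤ x) (h : γ * L x ^ (β + 1) ≤ C * x) : 0 < p β γ C x := by
  have hL := L_pos hx
  have hLβ := rpow_pos_of_pos hL β
  rw [rpow_add_one hL.ne'] at h
  have hle : γ * L x ≤ C * x / L x ^ β := by
    rw [le_div_iff₀ hLβ]; linarith
  have hlt := mul_lt_mul_of_pos_left (log_one_add_lt_L hx) hγ
  rw [p]; linarith

theorem p'_pos (hC : 0 < C) (hx : 0 ≤ x) (hL : 2 * β ≤ L x) (h : 2 * γ * L x ^ β ≤ C * x) :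
    0 < p' β γ C x := by
  have hLβ := rpow_pos_of_pos (L_pos hx) β
  have hlt : γ / (1 + x) < C * (1 / (2 * L x ^ β)) := by
    rw [div_lt_iff₀ (by positivity)]
    field_simp
    linarith
  have hq' := mul_le_mul_of_nonneg_left (one_div_two_mul_L_rpow_le_q' hx hL) hC.le
  rw [p']; linarith

theorem p''_nonpos (hβ : 0 ≤ β) (hγ : 0 ≤ γ) (hC : 0 ≤ C) (hx : 0 ≤ x)
    (hL : 2 * (β + 1) ≤ L x) (h : 2 * γ * exp 1 ^ 2 * L x ^ (β + 1) ≤ C * β * x) :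
    p'' β γ C x ≤ 0 := by
  have hL₀ := L_pos hx
  have hLβ := rpow_pos_of_pos hL₀ β
  rw [rpow_add_one hL₀.ne'] at h
  -- The factor `exp 1 ^ 2` in `h` pays for `e + x ≤ e (1 + x)`.
  have hE : (exp 1 + x) ^ 2 ≤ exp 1 ^ 2 * (1 + x) ^ 2 := by
    rw [← mul_pow]; gcongr; nlinarith [add_one_le_exp 1]
  have hle : γ / (1 + x) ^ 2 ≤ C * (β * x / (2 * (exp 1 + x) ^ 2 * L x * L x ^ β)) := by
    rw [mul_div_assoc', div_le_div_iff₀ (by positivity) (by positivity)]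
    nlinarith [mul_le_mul_of_nonneg_left hE (by positivity : 0 ≤ 2 * γ * L x * L x ^ β),
      mul_le_mul_of_nonneg_left h (by positivity : 0 ≤ (1 + x) ^ 2)]
  have hq'' := mul_le_mul_of_nonneg_left (q''_le hβ hx hL) hC
  rw [p'']; linarith

theorem neg_mul_log_le_p (hγ : 0 ≤ γ) (hC : 0 ≤ C) {z : ℝ} (hx : 0 ≤ x) (hxz : x ≤ z) :
    -(γ * log (1 + z)) ≤ p β γ C x := by
  have hq : 0 ≤ C * x / L x ^ β := by have := L_pos hx; positivity
  have hlog := mul_le_mul_of_nonneg_left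
    (log_le_log (by linarith) (by linarith : 1 + x ≤ 1 + z)) hγ
  rw [p]; linarith

theorem eventually_p_pos_p'_pos_p''_nonpos (hβ : 0 < β) (hγ : 0 < γ) (hC : 0 < C) :
    ∀ᶠ x in atTop, 0 < p β γ C x ∧ 0 < p' β γ C x ∧ p'' β γ C x ≤ 0 := by
  filter_upwards [eventually_ge_atTop 0, tendsto_L_atTop.eventually_ge_atTop (2 * (β + 1)),
    eventually_mul_L_rpow_le (β + 1) γ hC, eventually_mul_L_rpow_le β (2 * γ) hC,
    eventually_mul_L_rpow_le (β + 1) (2 * γ * exp 1 ^ 2) (mul_pos hC hβ)]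
    with x hx hL h₁ h₂ h₃
  exact ⟨p_pos hγ hx h₁, p'_pos hC hx (by linarith) h₂, p''_nonpos hβ.le hγ.le hC.le hx hL h₃⟩

end SubexpWeight

open SubexpWeight in
/-- **Lemma 7.1.** For `β, γ, C > 0` let `p(x) = Cx/(ln(e+x))^β − γ ln(1+x)`. Then there
are `x₀ > 0` and `M > 0` such that (i) `p` is positive and increasing on `[x₀,∞)`,
(ii) `p'` is positive and decreasing on `[x₀,∞)`, and (iii) `0 < p(x+y) ≤ p(x)+p(y)+M`
for all `x ≥ x₀` and `y ≥ 0`. -/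
theorem subexp_minus_log_weight_function
    (β γ C : ℝ) (hβ : 0 < β) (hγ : 0 < γ) (hC : 0 < C) :
    ∃ x₀ M : ℝ, 0 < x₀ ∧ 0 < M ∧
      -- (i) `p` is positive and increasing on `[x₀, ∞)`
      (∀ x ∈ Set.Ici x₀,
        0 < C * x / Real.log (Real.exp 1 + x) ^ β - γ * Real.log (1 + x)) ∧
      MonotoneOn (fun x : ℝ =>
        C * x / Real.log (Real.exp 1 + x) ^ β - γ * Real.log (1 + x)) (Set.Ici x₀) ∧
      -- (ii) `p'` is positive and decreasing on `[x₀, ∞)`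
      (∀ x ∈ Set.Ici x₀,
        0 < deriv (fun x : ℝ =>
          C * x / Real.log (Real.exp 1 + x) ^ β - γ * Real.log (1 + x)) x) ∧
      AntitoneOn (deriv (fun x : ℝ =>
        C * x / Real.log (Real.exp 1 + x) ^ β - γ * Real.log (1 + x))) (Set.Ici x₀) ∧
      -- (iii) for all `x ≥ x₀` and `y ≥ 0`, `0 < p(x+y) ≤ p(x) + p(y) + M`
      (∀ x ∈ Set.Ici x₀, ∀ y : ℝ, 0 ≤ y →
        (0 < C * (x + y) / Real.log (Real.exp 1 + (x + y)) ^ β -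
            γ * Real.log (1 + (x + y))) ∧
        C * (x + y) / Real.log (Real.exp 1 + (x + y)) ^ β -
            γ * Real.log (1 + (x + y)) ≤
          (C * x / Real.log (Real.exp 1 + x) ^ β - γ * Real.log (1 + x)) +
          (C * y / Real.log (Real.exp 1 + y) ^ β - γ * Real.log (1 + y)) + M) := by
  obtain ⟨x₀, hsign⟩ := ((eventually_p_pos_p'_pos_p''_nonpos hβ hγ hC).and
    (eventually_gt_atTop 0)).exists_forall_of_atTop
  have hx₀ : 0 < x₀ := (hsign x₀ le_rfl).2
  have hd : ∀ x ∈ Set.Ici x₀, HasDerivAt (p β γ C) (p' β γ C x) x :=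
    fun x hx ↦ hasDerivAt_p (hsign x hx).2.le
  have hd' : ∀ x ∈ Set.Ici x₀, HasDerivAt (p' β γ C) (p'' β γ C x) x :=
    fun x hx ↦ hasDerivAt_p' (hsign x hx).2.le
  have hpos : ∀ x ∈ Set.Ici x₀, 0 < p β γ C x := fun x hx ↦ (hsign x hx).1.1
  have hmono := monotoneOn_Ici_of_hasDerivAt_nonneg hd fun x hx ↦ (hsign x hx).1.2.1.le
  have hconc := concaveOn_Ici_of_hasDerivAt2_nonpos hd hd' fun x hx ↦ (hsign x hx).1.2.2
  have hderiv : Set.EqOn (p' β γ C) (deriv (p β γ C)) (Set.Ici x₀) :=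
    fun x hx ↦ (hd x hx).deriv.symm
  have hlog : 0 < γ * log (1 + x₀) := mul_pos hγ (log_pos (by linarith))
  refine ⟨x₀, p β γ C (2 * x₀) + γ * log (1 + x₀), hx₀,
    add_pos (hpos _ (by simp only [Set.mem_Ici]; linarith)) hlog, hpos, hmono,
    fun x hx ↦ hderiv hx ▸ (hsign x hx).1.2.1,
    (antitoneOn_Ici_of_hasDerivAt_nonpos hd' fun x hx ↦ (hsign x hx).1.2.2).congr hderiv,
    fun x hx y hy ↦ ⟨hpos _ (by simp only [Set.mem_Ici] at hx ⊢; linarith), ?_⟩⟩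
  exact hconc.map_add_le_add_add_of_monotoneOn hmono hx₀.le (hpos _ Set.self_mem_Ici).le hlog.le
    (fun y hy ↦ neg_mul_log_le_p hγ.le hC.le hy.1 hy.2.le) hx hy

end
end
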